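/- arXiv:math/0611761 — 9 statements merged into one kernel-verified Lean document; each statement's English description precedes it below -/
import Mathlib

section
/- Let a, b be extended reals with a < b and let I = (a,b) be the corresponding open interval of ℝ. Let n₀ be a non-negative integer and (f_n)_{n ≥ n₀} a sequence of real functions, each differentiable and strictly increasing on I, with f_n'(x) > 0 for all x ∈ I. Assume: (i) for every n ≥ n₀ the function x ↦ f_{n+1}'(x)/f_n'(x) is nondecreasing on I; (ii) for every x ∈ I the numerical sequence (f_n(x))_{n ≥ n₀} is strictly increasing in n; (iii) there is a function g : ℝ → ℝ, nondecreasing on ℝ, such that g(f_{n+1}(x)) ≤ f_{n+1}'(x)/f_n'(x) for all n ≥ n₀ and all x ∈ I. Let (u_n)_{n ∈ ℕ} be a sequence of integers such that limsup_{n→∞} u_n = +∞, such that there is N ∈ ℕ with u_{n+1} − u_n ≤ g(u_n) − 1 for all n ≥ N, and such that for at least one index m ≥ N both u_m ∈ f_{n₀}(I) and u_m + 1 ∈ f_{n₀}(I). Then there exists a real number A ∈ I and a strictly increasing map k : ℕ → ℕ such that ⌊f_n(A)⌋ = u_{k(n − n₀)} for every n ≥ n₀, and the sequence (⌊f_n(A)⌋)_{n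 ≥ n₀} is strictly increasing. -/
open Filter Set

/-- Theorem 1 of the paper (main theorem): generalization of Mills' method
to a sequence of functions. -/
theorem stmt_0 (a b : EReal) (hab : a < b)
    (I : Set ℝ) (hI : I = {x : ℝ | a < (x : EReal) ∧ (x : EReal) < b})
    (n₀ : ℕ) (f f' : ℕ → ℝ → ℝ)
    (hderiv : ∀ n ≥ n₀, ∀ x ∈ I, HasDerivAt (f n) (f' n x) x)
    (hf'pos : ∀ n ≥ n₀, ∀ x ∈ I, 0 < f' n x)
    (hmono : ∀ n ≥ n₀, StrictMonoOn (f n) I)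
    (hratio : ∀ n ≥ n₀, MonotoneOn (fun x => f' (n + 1) x / f' n x) I)
    (hseq : ∀ x ∈ I, ∀ n ≥ n₀, f n x < f (n + 1) x)
    (g : ℝ → ℝ) (hg : Monotone g)
    (hgf : ∀ n ≥ n₀, ∀ x ∈ I, g (f (n + 1) x) ≤ f' (n + 1) x / f' n x)
    (u : ℕ → ℤ)
    (hlimsup : Filter.atTop.limsup (fun n => ((u n : ℝ) : EReal)) = ⊤)
    (N : ℕ)
    (hgap : ∀ n ≥ N, ((u (n + 1) : ℝ) - (u n : ℝ)) ≤ g (u n) - 1)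
    (m : ℕ) (hm : N ≤ m)
    (hmem : ((u m : ℝ)) ∈ f n₀ '' I ∧ ((u m : ℝ) + 1) ∈ f n₀ '' I) :
    ∃ A ∈ I, ∃ k : ℕ → ℕ, StrictMono k ∧
      (∀ n ≥ n₀, ⌊f n A⌋ = u (k (n - n₀))) ∧
      (∀ n ≥ n₀, ⌊f n A⌋ < ⌊f (n + 1) A⌋) := by
  classical
  -- I is order-convex
  have hIconv : ∀ x ∈ I, ∀ y ∈ I, ∀ z : ℝ, x ≤ z → z ≤ y → z ∈ I := by
    intro x hx y hy z hxz hzy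
    rw [hI] at hx hy ⊢
    constructor
    · exact lt_of_lt_of_le hx.1 (by exact_mod_cast hxz)
    · exact lt_of_le_of_lt (by exact_mod_cast hzy) hy.2
  have hcont : ∀ n, n₀ ≤ n → ContinuousOn (f n) I := fun n hn x hx =>
    ((hderiv n hn x hx).continuousAt).continuousWithinAt
  have hmonoOn : ∀ n, n₀ ≤ n → MonotoneOn (f n) I := fun n hn => (hmono n hn).monotoneOn
  -- frequently large values of u
  have hfreq : ∀ (M : ℝ) (j : ℕ), ∃ i, j < i ∧ M ≤ (u i : ℝ) := by
    intro M j
    have h1 : ((M : ℝ) : EReal) < Filter.atTop.limsup (fun n => ((u n : ℝ) : EReal)) := by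
      rw [hlimsup]; exact lt_top_iff_ne_top.mpr (EReal.coe_ne_top M)
    have h2 := Filter.frequently_lt_of_lt_limsup (by isBoundedDefault) h1
    obtain ⟨i, hi1, hi2⟩ := (h2.and_eventually (Filter.eventually_gt_atTop j)).exists
    refine ⟨i, hi2, le_of_lt ?_⟩
    exact_mod_cast hi1
  -- the invariant
  set Inv : ℕ → ℕ × ℝ × ℝ → Prop := fun n p =>
    N ≤ p.1 ∧ p.2.1 ∈ I ∧ p.2.2 ∈ I ∧ f n p.2.1 = (u p.1 : ℝ) ∧ f n p.2.2 = (u p.1 : ℝ) + 1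
    with hInvdef
  -- the induction step
  have step : ∀ n, n₀ ≤ n → ∀ j : ℕ, ∀ α β : ℝ, Inv n (j, α, β) →
      ∃ j' : ℕ, ∃ α' β' : ℝ, Inv (n + 1) (j', α', β') ∧ j < j' ∧ α ≤ α' ∧ β' < β ∧
        (u j : ℝ) < u j' := by
    intro n hn j α β hp
    obtain ⟨hjN, hαI, hβI, hfα, hfβ⟩ := hp
    simp only at hαI hβI hfα hfβ
    have hn1 : n₀ ≤ n + 1 := le_trans hn (Nat.le_succ n)
    have hαβ : α < β := by
      have := (hmono n hn).lt_iff_lt hαI hβI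
      rw [← this, hfα, hfβ]; linarith
    have hIcc : Icc α β ⊆ I := fun z hz => hIconv α hαI β hβI z hz.1 hz.2
    have hc1 : ContinuousOn (f (n + 1)) (Icc α β) := (hcont (n + 1) hn1).mono hIcc
    have hc0 : ContinuousOn (f n) (Icc α β) := (hcont n hn).mono hIcc
    -- Cauchy mean value theorem
    obtain ⟨c, hcIoo, hc⟩ := exists_ratio_hasDerivAt_eq_ratio_slope (f (n + 1)) (f' (n + 1))
      hαβ hc1 (fun x hx => hderiv (n + 1) hn1 x (hIcc (Ioo_subset_Icc_self hx)))
      (f n) (f' n) hc0 (fun x hx => hderiv n hn x (hIcc (Ioo_subset_Icc_self hx)))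
    have hcI : c ∈ I := hIcc (Ioo_subset_Icc_self hcIoo)
    have h1 : f n β - f n α = 1 := by rw [hfα, hfβ]; ring
    rw [h1, one_mul] at hc
    -- hc : f' (n+1) c = (f (n+1) β - f (n+1) α) * f' n c
    have hfnc : 0 < f' n c := hf'pos n hn c hcI
    have hD : f (n + 1) β - f (n + 1) α = f' (n + 1) c / f' n c := by
      field_simp [ne_of_gt hfnc]; linarith [hc]
    have hkey : g (f (n + 1) α) ≤ f (n + 1) β - f (n + 1) α := by
      rw [hD]
      calc g (f (n + 1) α) ≤ f' (n + 1) α / f' n α := hgf n hn α hαI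
        _ ≤ f' (n + 1) c / f' n c := hratio n hn hαI hcI (le_of_lt hcIoo.1)
    have hfαlt : f n α < f (n + 1) α := hseq α hαI n hn
    have hαβ1 : f (n + 1) α < f (n + 1) β := (hmono (n + 1) hn1) hαI hβI hαβ
    -- choose the next index
    have hex : ∃ i, j < i ∧ f (n + 1) α ≤ (u i : ℝ) := by
      obtain ⟨i, hi1, hi2⟩ := hfreq (f (n + 1) β) j
      exact ⟨i, hi1, le_trans (le_of_lt hαβ1) hi2⟩
    set j' := Nat.find hex with hj'def
    obtain ⟨hjj', huj'⟩ := Nat.find_spec hex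
    have hj'pos : j ≤ j' - 1 := by omega
    have hj'succ : j' - 1 + 1 = j' := by omega
    have hpred : (u (j' - 1) : ℝ) < f (n + 1) α := by
      rcases eq_or_lt_of_le hj'pos with h | h
      · rw [← h, ← hfα]; exact hfαlt
      · have hmin := Nat.find_min hex (show j' - 1 < j' by omega)
        push_neg at hmin
        exact hmin h
    have hgap' := hgap (j' - 1) (le_trans hjN hj'pos)
    rw [hj'succ] at hgap'
    have hub : (u j' : ℝ) + 1 < f (n + 1) β := by
      have h2 : g (u (j' - 1)) ≤ g (f (n + 1) α) := hg (le_of_lt hpred)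
      have h3 : (u j' : ℝ) + 1 ≤ (u (j' - 1) : ℝ) + g (u (j' - 1)) := by linarith
      calc (u j' : ℝ) + 1 ≤ (u (j' - 1) : ℝ) + g (u (j' - 1)) := h3
        _ < f (n + 1) α + g (f (n + 1) α) := by linarith
        _ ≤ f (n + 1) β := by linarith
    -- intermediate value theorem
    have hIVT := intermediate_value_Icc (le_of_lt hαβ) hc1
    obtain ⟨α', hα'mem, hfα'⟩ := hIVT ⟨huj', le_trans (by linarith) (le_of_lt hub)⟩
    obtain ⟨β', hβ'mem, hfβ'⟩ := hIVT ⟨le_trans huj' (by linarith), le_of_lt hub⟩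
    have hα'I : α' ∈ I := hIcc hα'mem
    have hβ'I : β' ∈ I := hIcc hβ'mem
    have hβ'β : β' < β := by
      have := (hmono (n + 1) hn1).lt_iff_lt hβ'I hβI
      rw [← this, hfβ']; exact hub
    refine ⟨j', α', β', ⟨le_trans hjN (le_of_lt hjj'), hα'I, hβ'I, hfα', hfβ'⟩,
      hjj', hα'mem.1, hβ'β, ?_⟩
    calc (u j : ℝ) = f n α := hfα.symm
      _ < f (n + 1) α := hfαlt
      _ ≤ (u j' : ℝ) := huj'
  -- initial data
  obtain ⟨⟨x₁, hx₁I, hx₁⟩, ⟨x₂, hx₂I, hx₂⟩⟩ := hmem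
  have hInv0 : Inv n₀ (m, x₁, x₂) := ⟨hm, hx₁I, hx₂I, hx₁, hx₂⟩
  choose jF αF βF hIF hjF hαF hβF huF using step
  -- build the nested sequence
  let F : ∀ i : ℕ, {p : ℕ × ℝ × ℝ // Inv (n₀ + i) p} → {p : ℕ × ℝ × ℝ // Inv (n₀ + (i + 1)) p} :=
    fun i p => ⟨(jF (n₀ + i) (Nat.le_add_right n₀ i) p.1.1 p.1.2.1 p.1.2.2 p.2,
      αF (n₀ + i) (Nat.le_add_right n₀ i) p.1.1 p.1.2.1 p.1.2.2 p.2,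
      βF (n₀ + i) (Nat.le_add_right n₀ i) p.1.1 p.1.2.1 p.1.2.2 p.2),
      hIF (n₀ + i) (Nat.le_add_right n₀ i) p.1.1 p.1.2.1 p.1.2.2 p.2⟩
  let seq : ∀ i : ℕ, {p : ℕ × ℝ × ℝ // Inv (n₀ + i) p} :=
    fun i => Nat.rec ⟨(m, x₁, x₂), hInv0⟩ F i
  set ks : ℕ → ℕ := fun i => (seq i).1.1 with hksdef
  set αs : ℕ → ℝ := fun i => (seq i).1.2.1 with hαsdef
  set βs : ℕ → ℝ := fun i => (seq i).1.2.2 with hβsdef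
  have hInvs : ∀ i, Inv (n₀ + i) (ks i, αs i, βs i) := fun i => (seq i).2
  have hsucc : ∀ i, ks i < ks (i + 1) ∧ αs i ≤ αs (i + 1) ∧ βs (i + 1) < βs i ∧
      (u (ks i) : ℝ) < u (ks (i + 1)) := by
    intro i
    exact ⟨hjF (n₀ + i) (Nat.le_add_right n₀ i) (ks i) (αs i) (βs i) (seq i).2,
      hαF (n₀ + i) (Nat.le_add_right n₀ i) (ks i) (αs i) (βs i) (seq i).2,
      hβF (n₀ + i) (Nat.le_add_right n₀ i) (ks i) (αs i) (βs i) (seq i).2,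
      huF (n₀ + i) (Nat.le_add_right n₀ i) (ks i) (αs i) (βs i) (seq i).2⟩
  have hαmono : Monotone αs := monotone_nat_of_le_succ fun i => (hsucc i).2.1
  have hβanti : StrictAnti βs := strictAnti_nat_of_succ_lt fun i => (hsucc i).2.2.1
  have hαsβs : ∀ i, αs i < βs i := by
    intro i
    obtain ⟨_, hαI, hβI, hfα, hfβ⟩ := hInvs i
    have := (hmono (n₀ + i) (Nat.le_add_right n₀ i)).lt_iff_lt hαI hβI
    rw [← this, hfα, hfβ]; linarith
  have hcross : ∀ i j, αs i < βs j := by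
    intro i j
    rcases le_total i j with h | h
    · exact lt_of_le_of_lt (hαmono h) (hαsβs j)
    · exact lt_of_lt_of_le (hαsβs i) (hβanti.antitone h)
  have hbdd : BddAbove (Set.range αs) := ⟨βs 0, by rintro _ ⟨i, rfl⟩; exact le_of_lt (hcross i 0)⟩
  set A := ⨆ i, αs i with hAdef
  have hAge : ∀ i, αs i ≤ A := fun i => le_ciSup hbdd i
  have hAle : ∀ i, A ≤ βs i := fun i => ciSup_le fun j => le_of_lt (hcross j i)
  have hAlt : ∀ i, A < βs i := fun i => lt_of_le_of_lt (hAle (i + 1)) ((hsucc i).2.2.1)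
  have hAI : A ∈ I := hIconv (αs 0) (hInvs 0).2.1 (βs 0) (hInvs 0).2.2.1 A (hAge 0)
    (hAle 0)
  -- floor values
  have hfloor : ∀ i, ⌊f (n₀ + i) A⌋ = u (ks i) := by
    intro i
    obtain ⟨_, hαI, hβI, hfα, hfβ⟩ := hInvs i
    rw [Int.floor_eq_iff]
    constructor
    · rw [← hfα]; exact hmonoOn (n₀ + i) (Nat.le_add_right n₀ i) hαI hAI (hAge i)
    · have : f (n₀ + i) A < f (n₀ + i) (βs i) :=
        hmono (n₀ + i) (Nat.le_add_right n₀ i) hAI hβI (hAlt i)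
      rw [hfβ] at this; exact_mod_cast this
  refine ⟨A, hAI, ks, strictMono_nat_of_lt_succ (fun i => (hsucc i).1), ?_, ?_⟩
  · intro n hn
    obtain ⟨i, rfl⟩ : ∃ i, n = n₀ + i := ⟨n - n₀, by omega⟩
    rw [Nat.add_sub_cancel_left]
    exact hfloor i
  · intro n hn
    obtain ⟨i, rfl⟩ : ∃ i, n = n₀ + i := ⟨n - n₀, by omega⟩
    show ⌊f (n₀ + i) A⌋ < ⌊f (n₀ + (i + 1)) A⌋
    rw [hfloor i, hfloor (i + 1)]
    exact_mod_cast (hsucc i).2.2.2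
end

section
/- Assume there exist a real constant k > 1 and a constant C > 0 such that p_{n+1} − p_n ≤ C·(log p_n)^k for every n ∈ ℕ. Then for every real ξ > 1 there exists a real A > 1 such that the sequence (⌊A^{n^ξ}⌋)_{n ≥ 1} is strictly increasing and ⌊A^{n^ξ}⌋ is a prime number for every integer n ≥ 1. -/
/-!
If primes `q₀ < q₁ < ⋯` satisfy `q_n ^ r_n ≤ q_{n+1}` and `q_{n+1} + 1 < (q_n + 1) ^ r_n` with
`r_n = e_{n+1} / e_n`, then the intervals `[q_n ^ (1 / e_n), (q_n + 1) ^ (1 / e_n))` are nested,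
and any `A` in all of them has `⌊A ^ e_n⌋ = q_n`. For `e_n = (n + 1) ^ ξ` such primes are chosen
inductively: once `log q_n ≥ L (n + 1) ^ ξ` with `L` large, the gap between `q_n ^ r_n` and
`(q_n + 1) ^ r_n` is at least `q_n ^ (r_n - 1) ≥ exp ((log q_n) ^ (1 - 1 / ξ))`, which beats the
prime gap `C (log x) ^ k` at `x = q_n ^ r_n`.
-/

open Real Filter

theorem exists_prime_gt_le_add_of_gap {G : ℝ → ℝ} (hG : MonotoneOn G (Set.Ici 2))
    (hgap : ∀ n : ℕ,
      (Nat.nth Nat.Prime (n + 1) : ℝ) - Nat.nth Nat.Prime n ≤ G (Nat.nth Nat.Prime n))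
    {x : ℝ} (hx : 2 ≤ x) :
    ∃ p : ℕ, p.Prime ∧ x < p ∧ (p : ℝ) ≤ x + G x := by
  have hex : ∃ j, x < Nat.nth Nat.Prime j := ⟨⌈x⌉₊, (Nat.le_ceil x).trans_lt <| by
    exact_mod_cast (Nat.add_two_le_nth_prime ⌈x⌉₊).trans_lt' (by omega)⟩
  obtain ⟨i, hi⟩ : ∃ i, Nat.find hex = i + 1 := Nat.exists_eq_succ_of_ne_zero fun h0 => by
    have h := Nat.find_spec hex
    rw [h0, Nat.nth_prime_zero_eq_two, Nat.cast_ofNat] at h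
    linarith
  have hlt : x < Nat.nth Nat.Prime (i + 1) := hi ▸ Nat.find_spec hex
  have hle : (Nat.nth Nat.Prime i : ℝ) ≤ x := not_lt.1 (Nat.find_min hex (by omega))
  have htwo : (2 : ℝ) ≤ Nat.nth Nat.Prime i := by exact_mod_cast (Nat.prime_nth_prime i).two_le
  refine ⟨_, Nat.prime_nth_prime (i + 1), hlt, ?_⟩
  linarith [hgap i, hG htwo (htwo.trans hle) hle]

theorem monotoneOn_mul_log_rpow {C k : ℝ} (hC : 0 ≤ C) (hk : 0 ≤ k) :
    MonotoneOn (fun x => C * log x ^ k) (Set.Ici 2) := fun a (ha : 2 ≤ a) _ _ hab =>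
  mul_le_mul_of_nonneg_left
    (rpow_le_rpow (log_nonneg (by linarith)) (log_le_log (by linarith) hab) hk) hC

theorem eventually_mul_rpow_add_one_lt_exp_rpow (C : ℝ) {B k α : ℝ} (hB : 0 ≤ B) (hk : 0 ≤ k)
    (hα : 0 < α) : ∀ᶠ t in atTop, C * (B * t) ^ k + 1 < exp (t ^ α) := by
  set D := C * B ^ k
  have hexp : ∀ᶠ u in atTop, D * u ^ (k / α) + 1 < exp u := by
    filter_upwards [(tendsto_exp_div_rpow_atTop (k / α)).eventually_gt_atTop (|D| + 1),
      eventually_ge_atTop 1] with u hu hu1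
    have hpow : 1 ≤ u ^ (k / α) := one_le_rpow hu1 (by positivity)
    rw [lt_div_iff₀ (by linarith)] at hu
    nlinarith [le_abs_self D]
  filter_upwards [(tendsto_rpow_atTop hα).eventually hexp, eventually_ge_atTop 0] with t ht ht0
  calc C * (B * t) ^ k + 1 = D * (t ^ α) ^ (k / α) + 1 := by
        rw [← rpow_mul ht0, mul_div_cancel₀ _ hα.ne', mul_rpow hB ht0, mul_assoc]
    _ < exp (t ^ α) := ht

theorem rpow_add_rpow_sub_one_le_add_one_rpow {q r : ℝ} (hq : 0 < q) (hr : 1 ≤ r) :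
    q ^ r + q ^ (r - 1) ≤ (q + 1) ^ r := by
  have hbern : 1 + r * q⁻¹ ≤ (1 + q⁻¹) ^ r :=
    one_add_mul_self_le_rpow_one_add (by linarith [inv_pos.2 hq]) hr
  have hsplit : (q + 1) ^ r = q ^ r * (1 + q⁻¹) ^ r := by
    rw [← mul_rpow hq.le (by positivity), mul_add, mul_inv_cancel₀ hq.ne', mul_one]
  have hsub : q ^ (r - 1) = q ^ r * q⁻¹ := by rw [rpow_sub_one hq.ne', div_eq_mul_inv]
  have hpos : 0 < q ^ r * q⁻¹ := by positivity
  rw [hsplit, hsub]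
  nlinarith [mul_le_mul_of_nonneg_left hbern (rpow_pos_of_pos hq r).le]

theorem rpow_one_sub_inv_le {ξ n t : ℝ} (hξ : 1 ≤ ξ) (hn : 0 < n) (ht : n ^ ξ ≤ t) :
    t ^ (1 - ξ⁻¹) ≤ ((n + 1) ^ ξ / n ^ ξ - 1) * t := by
  have ht0 : 0 < t := (rpow_pos_of_pos hn ξ).trans_le ht
  have hroot : n ≤ t ^ ξ⁻¹ := by
    rw [← rpow_rpow_inv hn.le (by linarith : ξ ≠ 0)]
    exact rpow_le_rpow (by positivity) ht (by positivity)
  have hratio : 1 + n⁻¹ ≤ (n + 1) ^ ξ / n ^ ξ := by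
    have hbern := one_add_mul_self_le_rpow_one_add (by linarith [inv_pos.2 hn] : -1 ≤ n⁻¹) hξ
    rw [← div_rpow (by linarith) hn.le, add_div, div_self hn.ne', one_div]
    nlinarith [inv_pos.2 hn]
  calc t ^ (1 - ξ⁻¹) = t / t ^ ξ⁻¹ := by rw [rpow_sub ht0, rpow_one]
    _ ≤ t / n := div_le_div_of_nonneg_left ht0.le hn hroot
    _ = n⁻¹ * t := by ring
    _ ≤ _ := mul_le_mul_of_nonneg_right (by linarith) ht0.le

section PrimeSequence

variable {C k ξ : ℝ} (hC : 0 ≤ C) (hk : 0 ≤ k)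
  (hnext : ∀ x : ℝ, 2 ≤ x → ∃ p : ℕ, p.Prime ∧ x < p ∧ (p : ℝ) ≤ x + C * log x ^ k)
include hC hk hnext

theorem exists_prime_rpow_lt_of_le_log {L : ℝ} (hξ : 1 ≤ ξ) (hL : 1 ≤ L)
    (hbound : ∀ t, L ≤ t → C * (2 ^ ξ * t) ^ k + 1 < exp (t ^ (1 - ξ⁻¹)))
    {n : ℝ} (hn : 1 ≤ n) {q : ℕ} (hq : 2 ≤ q) (hlog : L * n ^ ξ ≤ log q) :
    ∃ p : ℕ, p.Prime ∧ L * (n + 1) ^ ξ ≤ log p ∧ q < p ∧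
      (q : ℝ) ^ ((n + 1) ^ ξ / n ^ ξ) < p ∧
      (p : ℝ) + 1 < ((q : ℝ) + 1) ^ ((n + 1) ^ ξ / n ^ ξ) := by
  set r := (n + 1) ^ ξ / n ^ ξ with hr
  set t := log q
  have hq2 : (2 : ℝ) ≤ q := by exact_mod_cast hq
  have hnξ : 1 ≤ n ^ ξ := one_le_rpow hn (by linarith)
  have hnt : n ^ ξ ≤ t := le_trans (le_mul_of_one_le_left (by linarith) hL) hlog
  have hLt : L ≤ t := le_trans (le_mul_of_one_le_right (by linarith) hnξ) hlog
  have hr_eq : r = ((n + 1) / n) ^ ξ := by rw [div_rpow (by linarith) (by linarith)]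
  have hr1 : 1 ≤ r := by
    rw [hr_eq]; exact one_le_rpow ((le_div_iff₀ (by linarith)).2 (by linarith)) (by linarith)
  have hr2 : r ≤ 2 ^ ξ := by
    rw [hr_eq]; exact rpow_le_rpow (by positivity) ((div_le_iff₀ (by linarith)).2 (by linarith))
      (by linarith)
  have hqx : (q : ℝ) ≤ q ^ r := by
    simpa using rpow_le_rpow_of_exponent_le (by linarith : (1 : ℝ) ≤ q) hr1
  have hlogx : log ((q : ℝ) ^ r) = r * t := log_rpow (by linarith) r
  have hgap : C * log ((q : ℝ) ^ r) ^ k + 1 < (q : ℝ) ^ (r - 1) := by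
    rw [hlogx, rpow_def_of_pos (by linarith : (0 : ℝ) < q) (r - 1), mul_comm t]
    calc C * (r * t) ^ k + 1 ≤ C * (2 ^ ξ * t) ^ k + 1 := by gcongr
      _ < exp (t ^ (1 - ξ⁻¹)) := hbound t hLt
      _ ≤ exp ((r - 1) * t) := exp_le_exp.2 (rpow_one_sub_inv_le hξ (by linarith) hnt)
  obtain ⟨p, hp, hxp, hpx⟩ := hnext _ (hq2.trans hqx)
  refine ⟨p, hp, ?_, by exact_mod_cast hqx.trans_lt hxp, hxp, ?_⟩
  · calc L * (n + 1) ^ ξ = r * (L * n ^ ξ) := by rw [hr]; field_simp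
      _ ≤ r * t := mul_le_mul_of_nonneg_left hlog (by linarith)
      _ = log ((q : ℝ) ^ r) := hlogx.symm
      _ ≤ log p := log_le_log (by linarith) hxp.le
  · linarith [rpow_add_rpow_sub_one_le_add_one_rpow (by linarith : (0 : ℝ) < q) hr1]

theorem exists_strictMono_prime_seq (hξ : 1 < ξ) :
    ∃ q : ℕ → ℕ, StrictMono q ∧ (∀ m, (q m).Prime) ∧ ∀ m : ℕ,
      (q m : ℝ) ^ ((((m + 1 : ℕ) : ℝ) + 1) ^ ξ / ((m : ℝ) + 1) ^ ξ) < q (m + 1) ∧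
      (q (m + 1) : ℝ) + 1 <
        ((q m : ℝ) + 1) ^ ((((m + 1 : ℕ) : ℝ) + 1) ^ ξ / ((m : ℝ) + 1) ^ ξ) := by
  have hα : 0 < 1 - ξ⁻¹ := sub_pos.2 (inv_lt_one_of_one_lt₀ hξ)
  obtain ⟨L₀, hL₀⟩ := eventually_atTop.1
    (eventually_mul_rpow_add_one_lt_exp_rpow C (by positivity : (0 : ℝ) ≤ 2 ^ ξ) hk hα)
  set L := max L₀ 1
  let P : ℕ → ℕ → Prop := fun m q => q.Prime ∧ L * ((m : ℝ) + 1) ^ ξ ≤ log q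
  have hstep : ∀ m q, P m q → ∃ p, P (m + 1) p ∧ q < p ∧
      (q : ℝ) ^ ((((m + 1 : ℕ) : ℝ) + 1) ^ ξ / ((m : ℝ) + 1) ^ ξ) < p ∧
      (p : ℝ) + 1 < ((q : ℝ) + 1) ^ ((((m + 1 : ℕ) : ℝ) + 1) ^ ξ / ((m : ℝ) + 1) ^ ξ) := by
    rintro m q ⟨hq, hlog⟩
    obtain ⟨p, hp, hlogp, hqp, hlow, hup⟩ := exists_prime_rpow_lt_of_le_log hC hk hnext hξ.le
      (le_max_right _ _) (fun t ht => hL₀ t (le_of_max_le_left ht)) (n := (m : ℝ) + 1)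
      (by linarith [m.cast_nonneg (α := ℝ)]) hq.two_le hlog
    refine ⟨p, ⟨hp, ?_⟩, hqp, ?_, ?_⟩ <;> push_cast <;> assumption
  choose! next hnextP hnext_gt hnextR using hstep
  obtain ⟨q₀, hq₀L, hq₀⟩ := Nat.exists_infinite_primes ⌈exp L⌉₊
  have hP₀ : P 0 q₀ := by
    refine ⟨hq₀, ?_⟩
    rw [Nat.cast_zero, zero_add, one_rpow, mul_one, le_log_iff_exp_le (by exact_mod_cast hq₀.pos)]
    exact (Nat.le_ceil _).trans (by exact_mod_cast hq₀L)
  let q : ℕ → ℕ := fun m => Nat.rec q₀ next m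
  have hqP : ∀ m, P m (q m) := fun m => by
    induction m with
    | zero => exact hP₀
    | succ m ih => exact hnextP m _ ih
  exact ⟨q, strictMono_nat_of_lt_succ fun m => hnext_gt m _ (hqP m), fun m => (hqP m).1,
    fun m => hnextR m _ (hqP m)⟩

end PrimeSequence

theorem exists_floor_rpow_eq_of_nested {e : ℕ → ℝ} (he : ∀ n, 0 < e n) {q : ℕ → ℕ}
    (hlow : ∀ n, (q n : ℝ) ^ (e (n + 1) / e n) ≤ q (n + 1))
    (hup : ∀ n, (q (n + 1) : ℝ) + 1 < ((q n : ℝ) + 1) ^ (e (n + 1) / e n)) :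
    ∃ A : ℝ, ∀ n, ⌊A ^ e n⌋ = q n := by
  have hroot : ∀ {x : ℝ}, 0 ≤ x → ∀ n, (x ^ (e (n + 1) / e n)) ^ (e (n + 1))⁻¹ = x ^ (e n)⁻¹ :=
    fun hx n => by
      rw [← rpow_mul hx, div_mul_eq_mul_div, mul_inv_cancel₀ (he _).ne', one_div]
  set a : ℕ → ℝ := fun n => (q n : ℝ) ^ (e n)⁻¹
  set b : ℕ → ℝ := fun n => ((q n : ℝ) + 1) ^ (e n)⁻¹
  have ha : Monotone a := monotone_nat_of_le_succ fun n => by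
    simpa [a, hroot (Nat.cast_nonneg _)] using
      rpow_le_rpow (by positivity) (hlow n) (inv_pos.2 (he (n + 1))).le
  have hb : StrictAnti b := strictAnti_nat_of_succ_lt fun n => by
    simpa [b, hroot (by positivity : (0 : ℝ) ≤ q n + 1)] using
      rpow_lt_rpow (by positivity) (hup n) (inv_pos.2 (he (n + 1)))
  have hab : ∀ m n, a m < b n := fun m n => by
    have hlt : a (max m n) < b (max m n) :=
      rpow_lt_rpow (Nat.cast_nonneg _) (lt_add_one _) (inv_pos.2 (he _))
    exact (ha (le_max_left m n)).trans_lt (hlt.trans_le (hb.antitone (le_max_right m n)))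
  have hbdd : BddAbove (Set.range a) := ⟨b 0, Set.forall_mem_range.2 fun m => (hab m 0).le⟩
  set A := ⨆ n, a n
  have haA : ∀ n, a n ≤ A := le_ciSup hbdd
  have hAb : ∀ n, A < b n := fun n =>
    (ciSup_le fun m => (hab m (n + 1)).le).trans_lt (hb n.lt_succ_self)
  have hA : 0 ≤ A := (rpow_nonneg (Nat.cast_nonneg _) _).trans (haA 0)
  refine ⟨A, fun n => Int.floor_eq_iff.2 ⟨?_, ?_⟩⟩
  · calc ((q n : ℤ) : ℝ) = a n ^ e n := by simp [a, rpow_inv_rpow _ (he n).ne']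
      _ ≤ A ^ e n := rpow_le_rpow (by positivity) (haA n) (he n).le
  · calc A ^ e n < b n ^ e n := rpow_lt_rpow hA (hAb n) (he n)
      _ = ((q n : ℤ) : ℝ) + 1 := by
        simp [b, rpow_inv_rpow (by positivity : (0 : ℝ) ≤ q n + 1) (he n).ne']

/-- Corollary 1: under the weak Cramér conjecture, for every ξ > 1 there is A > 1
with ⌊A^(n^ξ)⌋ prime for all n ≥ 1 and strictly increasing. -/
theorem stmt_1 (k C : ℝ) (hk : 1 < k) (hC : 0 < C)
    (hgap : ∀ n : ℕ,
      ((Nat.nth Nat.Prime (n + 1) : ℝ) - (Nat.nth Nat.Prime n : ℝ)) ≤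
        C * (Real.log (Nat.nth Nat.Prime n)) ^ k) :
    ∀ ξ : ℝ, 1 < ξ → ∃ A : ℝ, 1 < A ∧
      (∀ n : ℕ, 1 ≤ n → ⌊A ^ ((n : ℝ) ^ ξ)⌋ < ⌊A ^ (((n : ℝ) + 1) ^ ξ)⌋) ∧
      (∀ n : ℕ, 1 ≤ n → Prime ⌊A ^ ((n : ℝ) ^ ξ)⌋) := by
  intro ξ hξ
  have hnext := fun x => exists_prime_gt_le_add_of_gap (x := x)
    (monotoneOn_mul_log_rpow hC.le (by linarith : (0 : ℝ) ≤ k)) hgap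
  obtain ⟨q, hq_mono, hq_prime, hq_nested⟩ :=
    exists_strictMono_prime_seq hC.le (by linarith) hnext hξ
  obtain ⟨A, hA⟩ := exists_floor_rpow_eq_of_nested (e := fun m => ((m : ℝ) + 1) ^ ξ)
    (fun m => by positivity) (fun m => (hq_nested m).1.le) (fun m => (hq_nested m).2)
  have hfloor : ∀ n : ℕ, 1 ≤ n → ⌊A ^ ((n : ℝ) ^ ξ)⌋ = q (n - 1) := fun n hn => by
    obtain ⟨m, rfl⟩ := Nat.exists_eq_add_of_le' hn
    simpa using hA m
  have hA_one : 1 < A := by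
    have h := hfloor 1 le_rfl
    rw [Nat.cast_one, one_rpow, rpow_one] at h
    have h1 : (1 : ℤ) < ⌊A⌋ := by rw [h]; exact_mod_cast (hq_prime 0).one_lt
    exact_mod_cast (Int.cast_lt.2 h1).trans_le (Int.floor_le A)
  refine ⟨A, hA_one, fun n hn => ?_, fun n hn => ?_⟩
  · rw [hfloor n hn, ← Nat.cast_add_one, hfloor (n + 1) (by omega)]
    exact_mod_cast hq_mono (by omega)
  · rw [hfloor n hn]
    exact Nat.prime_iff_prime_int.1 (hq_prime _)
end

section
/- Let k > 1 be a real constant and assume there exists C > 0 such that p_{n+1} − p_n ≤ C·(log p_n)^k for every n ∈ ℕ. Then for every real ε > 0 there exist an integer n₀ ≥ 1 and a real B > 0 such that the sequence (⌊B·(n!)^{k+ε}⌋)_{n ≥ n₀} is strictly increasing and ⌊B·(n!)^{k+ε}⌋ is a prime number for every integer n ≥ n₀. -/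
open Real Nat

/-- From the gap hypothesis: for every `x ≥ 2` there is a prime in `[x, x + C (log x)^k]`. -/
lemma mills_exists_prime (k C : ℝ) (hk : 0 ≤ k) (hC : 0 ≤ C)
    (hgap : ∀ n : ℕ,
      ((Nat.nth Nat.Prime (n + 1) : ℝ) - (Nat.nth Nat.Prime n : ℝ)) ≤
        C * (Real.log (Nat.nth Nat.Prime n)) ^ k)
    (x : ℝ) (hx : 2 ≤ x) :
    ∃ q : ℕ, q.Prime ∧ x ≤ q ∧ (q : ℝ) ≤ x + C * (Real.log x) ^ k := by
  classical
  have hlogx : 0 ≤ Real.log x := Real.log_nonneg (by linarith)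
  have hnonneg : 0 ≤ C * Real.log x ^ k := mul_nonneg hC (Real.rpow_nonneg hlogx _)
  set N := ⌈x⌉₊ with hN
  obtain ⟨P, hPN, hPprime⟩ := Nat.exists_infinite_primes N
  have hex : ∃ p : ℕ, N ≤ p ∧ p.Prime := ⟨P, hPN, hPprime⟩
  set q := Nat.find hex with hq
  obtain ⟨hqN, hqp⟩ := Nat.find_spec hex
  have hxq : x ≤ (q : ℝ) := le_trans (Nat.le_ceil x) (by exact_mod_cast hqN)
  refine ⟨q, hqp, hxq, ?_⟩
  by_cases h2 : q = 2
  · have : (q : ℝ) = 2 := by rw [h2]; norm_num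
    linarith
  · -- q > 2, so q = nth Prime (n+1) for some n, with nth Prime n < N ≤ x
    have hcq : Nat.nth Nat.Prime (Nat.count Nat.Prime q) = q := Nat.nth_count hqp
    have hc0 : Nat.count Nat.Prime q ≠ 0 := by
      intro h
      rw [h, Nat.nth_prime_zero_eq_two] at hcq
      exact h2 hcq.symm
    obtain ⟨n, hn⟩ : ∃ n, Nat.count Nat.Prime q = n + 1 := ⟨Nat.count Nat.Prime q - 1, by omega⟩
    rw [hn] at hcq
    set pn := Nat.nth Nat.Prime n with hpn
    have hpnp : pn.Prime := Nat.prime_nth_prime n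
    have hpnq : pn < q := by
      rw [← hcq]
      exact (Nat.nth_lt_nth Nat.infinite_setOf_prime).mpr (Nat.lt_succ_self n)
    have hpnN : pn < N := by
      by_contra h
      exact Nat.find_min hex hpnq ⟨Nat.le_of_not_lt h, hpnp⟩
    have hpnx : (pn : ℝ) ≤ x := by
      have h1 : (pn : ℝ) + 1 ≤ (N : ℝ) := by exact_mod_cast hpnN
      have h2' : (N : ℝ) < x + 1 := Nat.ceil_lt_add_one (by linarith)
      linarith
    have hpn2 : 2 ≤ pn := hpnp.two_le
    have hlogpn : 0 ≤ Real.log pn := Real.log_nonneg (by exact_mod_cast hpnp.one_lt.le)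
    have hloglog : Real.log pn ≤ Real.log x :=
      Real.log_le_log (by exact_mod_cast Nat.lt_of_lt_of_le Nat.zero_lt_two hpn2) hpnx
    have hpow : Real.log pn ^ k ≤ Real.log x ^ k := Real.rpow_le_rpow hlogpn hloglog hk
    have hg := hgap n
    rw [hcq] at hg
    have : (q : ℝ) ≤ (pn : ℝ) + C * Real.log pn ^ k := by linarith
    calc (q : ℝ) ≤ (pn : ℝ) + C * Real.log pn ^ k := this
      _ ≤ x + C * Real.log x ^ k := by
          have := mul_le_mul_of_nonneg_left hpow hC
          linarith

/-- Asymptotic bound: eventually `C (2a x log x)^k + 2 ≤ x^a` with `a = k + ε`. -/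
lemma mills_eventually (k ε C : ℝ) (hk : 0 < k) (hε : 0 < ε) (hC : 0 < C) :
    ∃ X : ℝ, 1 ≤ X ∧ ∀ x : ℝ, X ≤ x →
      C * (2 * (k + ε) * x * Real.log x) ^ k + 2 ≤ x ^ (k + ε) := by
  set a := k + ε with ha
  have ha0 : 0 < a := by positivity
  have hpow2a : (0:ℝ) < (2 * a) ^ k := Real.rpow_pos_of_pos (by linarith) _
  set c := 1 / (2 * C * (2 * a) ^ k) with hcdef
  have hcpos : 0 < c := by positivity
  have hlo := (isLittleO_log_rpow_rpow_atTop k hε).def hcpos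
  have h4 := (tendsto_rpow_atTop hε).eventually_ge_atTop (4 : ℝ)
  have h1 := Filter.eventually_ge_atTop (1 : ℝ)
  obtain ⟨X, hX⟩ := Filter.eventually_atTop.mp ((hlo.and h4).and h1)
  refine ⟨max X 1, le_max_right _ _, fun x hx => ?_⟩
  obtain ⟨⟨hlox, h4x⟩, h1x⟩ := hX x (le_trans (le_max_left _ _) hx)
  have hx0 : (0:ℝ) < x := lt_of_lt_of_le one_pos h1x
  have hlog0 : 0 ≤ Real.log x := Real.log_nonneg h1x
  have hlogk : Real.log x ^ k ≤ c * x ^ ε := by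
    have h1' : ‖Real.log x ^ k‖ = Real.log x ^ k := abs_of_nonneg (Real.rpow_nonneg hlog0 _)
    have h2' : ‖x ^ ε‖ = x ^ ε := abs_of_nonneg (Real.rpow_nonneg hx0.le _)
    rw [h1', h2'] at hlox
    exact hlox
  have hsplit : (2 * a * x * Real.log x) ^ k = (2 * a) ^ k * x ^ k * Real.log x ^ k := by
    rw [← Real.mul_rpow (by linarith : (0:ℝ) ≤ 2*a) hx0.le, ← Real.mul_rpow (by positivity) hlog0]
  have hxa : x ^ k * x ^ ε = x ^ a := by rw [← Real.rpow_add hx0, ha]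
  have hεa : x ^ ε ≤ x ^ a := Real.rpow_le_rpow_of_exponent_le h1x (by linarith)
  have hmain : C * (2 * a * x * Real.log x) ^ k ≤ (1/2) * x ^ a := by
    rw [hsplit]
    have h5 : C * ((2 * a) ^ k * x ^ k * Real.log x ^ k) ≤
        C * ((2 * a) ^ k * x ^ k * (c * x ^ ε)) := by
      have hxk : (0:ℝ) ≤ x ^ k := Real.rpow_nonneg hx0.le _
      have := mul_le_mul_of_nonneg_left hlogk (mul_nonneg hpow2a.le hxk)
      nlinarith [this]
    have h6 : C * ((2 * a) ^ k * x ^ k * (c * x ^ ε)) = (1/2) * x ^ a := by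
      rw [← hxa, hcdef]
      field_simp
    linarith [h5, h6.le, h6]
  have h4a : (4:ℝ) ≤ x ^ a := le_trans h4x hεa
  linarith

open Classical in
/-- One step of the Mills-type construction. -/
noncomputable def millsStep (a : ℝ) (n q : ℕ) : ℕ :=
  if h : ∃ p : ℕ, p.Prime ∧ (q : ℝ) * ((n : ℝ) + 1) ^ a ≤ (p : ℝ) ∧
      (p : ℝ) + 2 ≤ ((q : ℝ) + 1) * ((n : ℝ) + 1) ^ a then h.choose else 2

/-- The Mills-type sequence of primes. -/
noncomputable def millsSeq (a : ℝ) (n₀ : ℕ) : ℕ → ℕ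
  | 0 => 2
  | m + 1 => millsStep a (n₀ + m) (millsSeq a n₀ m)

lemma millsStep_spec {a : ℝ} {n q : ℕ}
    (h : ∃ p : ℕ, p.Prime ∧ (q : ℝ) * ((n : ℝ) + 1) ^ a ≤ (p : ℝ) ∧
      (p : ℝ) + 2 ≤ ((q : ℝ) + 1) * ((n : ℝ) + 1) ^ a) :
    (millsStep a n q).Prime ∧ (q : ℝ) * ((n : ℝ) + 1) ^ a ≤ (millsStep a n q) ∧
      ((millsStep a n q) : ℝ) + 2 ≤ ((q : ℝ) + 1) * ((n : ℝ) + 1) ^ a := by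
  rw [millsStep, dif_pos h]
  exact h.choose_spec

set_option maxHeartbeats 2000000 in
/-- Corollary 2: under the weak Cramér conjecture with constant k > 1, for every ε > 0
there are n₀ ≥ 1 and B > 0 with ⌊B·(n!)^(k+ε)⌋ prime for all n ≥ n₀ and strictly increasing. -/
theorem stmt_2 (k : ℝ) (hk : 1 < k) (C : ℝ) (hC : 0 < C)
    (hgap : ∀ n : ℕ,
      ((Nat.nth Nat.Prime (n + 1) : ℝ) - (Nat.nth Nat.Prime n : ℝ)) ≤
        C * (Real.log (Nat.nth Nat.Prime n)) ^ k) :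
    ∀ ε : ℝ, 0 < ε → ∃ n₀ : ℕ, 1 ≤ n₀ ∧ ∃ B : ℝ, 0 < B ∧
      (∀ n : ℕ, n₀ ≤ n →
        ⌊B * (n ! : ℝ) ^ (k + ε)⌋ < ⌊B * ((n + 1)! : ℝ) ^ (k + ε)⌋) ∧
      (∀ n : ℕ, n₀ ≤ n → Prime ⌊B * (n ! : ℝ) ^ (k + ε)⌋) := by
  intro ε hε
  have hk0 : (0:ℝ) < k := by linarith
  set a := k + ε with ha
  have ha1 : 1 < a := by simp only [ha]; linarith
  have ha0 : 0 < a := by linarith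
  -- choose n₀
  obtain ⟨X, hX1, hXall⟩ := mills_eventually k ε C hk0 hε hC
  set n₀ := max 2 ⌈X⌉₊ with hn₀def
  have hn₀2 : 2 ≤ n₀ := le_max_left _ _
  have Hgood : ∀ n : ℕ, n₀ ≤ n →
      C * (2 * a * ((n : ℝ) + 1) * Real.log ((n : ℝ) + 1)) ^ k + 2 ≤ ((n : ℝ) + 1) ^ a := by
    intro n hn
    have h1 : ⌈X⌉₊ ≤ n := le_trans (le_max_right _ _) hn
    have h2 : X ≤ (n : ℝ) := le_trans (Nat.le_ceil X) (by exact_mod_cast h1)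
    exact hXall ((n : ℝ) + 1) (by linarith)
  clear_value n₀
  set q : ℕ → ℕ := millsSeq a n₀ with hqdef
  have hq0 : q 0 = 2 := rfl
  have hqrec : ∀ m : ℕ, q (m + 1) = millsStep a (n₀ + m) (q m) := fun _ => rfl
  clear_value q
  clear hqdef
  -- basic facts about factorial powers
  have hFpos : ∀ n : ℕ, (0:ℝ) < ((n ! : ℕ) : ℝ) ^ a := fun n =>
    Real.rpow_pos_of_pos (by exact_mod_cast Nat.factorial_pos n) _
  have hF1 : ∀ n : ℕ, (1:ℝ) ≤ ((n ! : ℕ) : ℝ) ^ a := fun n =>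
    Real.one_le_rpow (by exact_mod_cast Nat.one_le_iff_ne_zero.mpr (Nat.factorial_ne_zero n)) ha0.le
  have hFsucc : ∀ n : ℕ, (((n + 1)! : ℕ) : ℝ) ^ a = ((n ! : ℕ) : ℝ) ^ a * ((n : ℝ) + 1) ^ a := by
    intro n
    rw [Nat.factorial_succ, Nat.cast_mul, Real.mul_rpow (by positivity) (by positivity)]
    push_cast
    ring
  -- single construction step
  have step : ∀ m : ℕ, (q m).Prime → ((q m : ℝ) + 1 ≤ 3 * (((n₀ + m)! : ℕ) : ℝ) ^ a) →
      (q (m + 1)).Prime ∧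
      (q m : ℝ) * (((n₀ + m : ℕ) : ℝ) + 1) ^ a ≤ (q (m + 1) : ℝ) ∧
      (q (m + 1) : ℝ) + 2 ≤ ((q m : ℝ) + 1) * (((n₀ + m : ℕ) : ℝ) + 1) ^ a := by
    intro m hqp hinv
    set n := n₀ + m with hndef
    have hn2 : 2 ≤ n := le_trans hn₀2 (Nat.le_add_right _ _)
    have hbase : (3:ℝ) ≤ (n : ℝ) + 1 := by
      have : (2:ℝ) ≤ (n : ℝ) := by exact_mod_cast hn2
      linarith
    have hbase1 : (1:ℝ) ≤ (n : ℝ) + 1 := by linarith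
    have hpa1 : (1:ℝ) ≤ ((n : ℝ) + 1) ^ a := Real.one_le_rpow hbase1 ha0.le
    have hq2 : (2:ℝ) ≤ (q m : ℝ) := by exact_mod_cast hqp.two_le
    set x := (q m : ℝ) * ((n : ℝ) + 1) ^ a with hxdef
    have hx2 : 2 ≤ x := by nlinarith
    obtain ⟨p, hpprime, hpx, hpub⟩ := mills_exists_prime k C hk0.le hC.le hgap x hx2
    -- bound log x
    have hxub : x ≤ 3 * (((n + 1)! : ℕ) : ℝ) ^ a := by
      rw [hFsucc n]
      have := mul_le_mul_of_nonneg_right (by linarith : (q m : ℝ) ≤ 3 * ((n ! : ℕ) : ℝ) ^ a)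
        (by positivity : (0:ℝ) ≤ ((n : ℝ) + 1) ^ a)
      calc x ≤ 3 * ((n ! : ℕ) : ℝ) ^ a * ((n : ℝ) + 1) ^ a := by nlinarith
        _ = 3 * (((n ! : ℕ) : ℝ) ^ a * ((n : ℝ) + 1) ^ a) := by ring
    have hlogfact : Real.log (((n + 1)! : ℕ) : ℝ) ≤ ((n : ℝ) + 1) * Real.log ((n : ℝ) + 1) := by
      have hle : ((n + 1)! : ℕ) ≤ (n + 1) ^ (n + 1) := Nat.factorial_le_pow (n + 1)
      have hle' : (((n + 1)! : ℕ) : ℝ) ≤ ((n : ℝ) + 1) ^ (n + 1 : ℕ) := by exact_mod_cast hle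
      have := Real.log_le_log (by exact_mod_cast Nat.factorial_pos (n + 1)) hle'
      rw [Real.log_pow] at this
      push_cast at this ⊢
      linarith
    have hlog3 : Real.log 3 ≤ a * (((n : ℝ) + 1) * Real.log ((n : ℝ) + 1)) := by
      have h1 : Real.log 3 ≤ Real.log ((n : ℝ) + 1) := Real.log_le_log (by norm_num) hbase
      have h2 : 0 ≤ Real.log 3 := Real.log_nonneg (by norm_num)
      have hlogn1 : 0 ≤ Real.log ((n : ℝ) + 1) := h2.trans h1
      have h3 : (1:ℝ) ≤ a * ((n : ℝ) + 1) := by nlinarith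
      have h4 := mul_le_mul_of_nonneg_right h3 hlogn1
      nlinarith [h4, h1]
    have hlogx : Real.log x ≤ 2 * a * ((n : ℝ) + 1) * Real.log ((n : ℝ) + 1) := by
      have hx0 : (0:ℝ) < x := by linarith
      have h1 : Real.log x ≤ Real.log (3 * (((n + 1)! : ℕ) : ℝ) ^ a) :=
        Real.log_le_log hx0 hxub
      have hlog_rhs : Real.log (3 * (((n + 1)! : ℕ) : ℝ) ^ a) =
          Real.log 3 + a * Real.log (((n + 1)! : ℕ) : ℝ) := by
        rw [Real.log_mul (by norm_num : (3:ℝ) ≠ 0)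
          (ne_of_gt (by positivity : (0:ℝ) < (((n + 1)! : ℕ) : ℝ) ^ a)),
          Real.log_rpow (by exact_mod_cast Nat.factorial_pos (n + 1))]
      rw [hlog_rhs] at h1
      have h3 : a * Real.log (((n + 1)! : ℕ) : ℝ) ≤ a * (((n : ℝ) + 1) * Real.log ((n : ℝ) + 1)) :=
        mul_le_mul_of_nonneg_left hlogfact ha0.le
      calc Real.log x ≤ Real.log 3 + a * Real.log (((n + 1)! : ℕ) : ℝ) := h1
        _ ≤ a * (((n : ℝ) + 1) * Real.log ((n : ℝ) + 1)) +
            a * (((n : ℝ) + 1) * Real.log ((n : ℝ) + 1)) := by linarith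
        _ = 2 * a * ((n : ℝ) + 1) * Real.log ((n : ℝ) + 1) := by ring
    have hlogx0 : 0 ≤ Real.log x := Real.log_nonneg (by linarith)
    have hpowk : Real.log x ^ k ≤ (2 * a * ((n : ℝ) + 1) * Real.log ((n : ℝ) + 1)) ^ k :=
      Real.rpow_le_rpow hlogx0 hlogx hk0.le
    have hgap2 : C * Real.log x ^ k + 2 ≤ ((n : ℝ) + 1) ^ a := by
      have h1 := Hgood n (by omega)
      have h2 := mul_le_mul_of_nonneg_left hpowk hC.le
      linarith
    -- the step existential holds
    have hex : ∃ p : ℕ, p.Prime ∧ (q m : ℝ) * ((n : ℝ) + 1) ^ a ≤ (p : ℝ) ∧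
        (p : ℝ) + 2 ≤ ((q m : ℝ) + 1) * ((n : ℝ) + 1) ^ a := by
      refine ⟨p, hpprime, hpx, ?_⟩
      have : ((q m : ℝ) + 1) * ((n : ℝ) + 1) ^ a = x + ((n : ℝ) + 1) ^ a := by
        rw [hxdef]; ring
      rw [this]
      linarith
    rw [hqrec m]
    exact millsStep_spec hex
  -- invariant by induction
  have hQ : ∀ m : ℕ, (q m).Prime ∧ ((q m : ℝ) + 1 ≤ 3 * (((n₀ + m)! : ℕ) : ℝ) ^ a) := by
    intro m
    induction m with
    | zero =>
      constructor
      · exact hq0 ▸ Nat.prime_two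
      · have h1 := hF1 n₀
        rw [hq0]
        push_cast
        simpa using by nlinarith
    | succ m ih =>
      obtain ⟨hp, hI1, hI2⟩ := step m ih.1 ih.2
      refine ⟨hp, ?_⟩
      have h1 : ((q m : ℝ) + 1) * (((n₀ + m : ℕ) : ℝ) + 1) ^ a ≤
          3 * (((n₀ + m)! : ℕ) : ℝ) ^ a * (((n₀ + m : ℕ) : ℝ) + 1) ^ a :=
        mul_le_mul_of_nonneg_right ih.2 (by positivity)
      have h2 : (((n₀ + m + 1)! : ℕ) : ℝ) ^ a =
          (((n₀ + m)! : ℕ) : ℝ) ^ a * (((n₀ + m : ℕ) : ℝ) + 1) ^ a := hFsucc (n₀ + m)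
      have : (q (m + 1) : ℝ) + 2 ≤ 3 * (((n₀ + m + 1)! : ℕ) : ℝ) ^ a := by
        rw [h2]
        calc (q (m + 1) : ℝ) + 2 ≤ ((q m : ℝ) + 1) * (((n₀ + m : ℕ) : ℝ) + 1) ^ a := hI2
          _ ≤ 3 * ((((n₀ + m)! : ℕ) : ℝ) ^ a * (((n₀ + m : ℕ) : ℝ) + 1) ^ a) := by
              rw [← mul_assoc]; exact h1
      have heq : n₀ + (m + 1) = n₀ + m + 1 := by ring
      rw [heq]
      linarith
  -- the step conclusions, available for all m
  have hI : ∀ m : ℕ,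
      (q m : ℝ) * (((n₀ + m : ℕ) : ℝ) + 1) ^ a ≤ (q (m + 1) : ℝ) ∧
      (q (m + 1) : ℝ) + 2 ≤ ((q m : ℝ) + 1) * (((n₀ + m : ℕ) : ℝ) + 1) ^ a :=
    fun m => ⟨(step m (hQ m).1 (hQ m).2).2.1, (step m (hQ m).1 (hQ m).2).2.2⟩
  -- sequences
  set A : ℕ → ℝ := fun m => (q m : ℝ) / (((n₀ + m)! : ℕ) : ℝ) ^ a with hAdef
  set Bs : ℕ → ℝ := fun m => ((q m : ℝ) + 1) / (((n₀ + m)! : ℕ) : ℝ) ^ a with hBsdef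
  have hAmono : Monotone A := by
    apply monotone_nat_of_le_succ
    intro m
    rw [hAdef]
    simp only
    rw [div_le_div_iff₀ (hFpos _) (hFpos _)]
    have h2 : (((n₀ + (m+1))! : ℕ) : ℝ) ^ a =
        (((n₀ + m)! : ℕ) : ℝ) ^ a * (((n₀ + m : ℕ) : ℝ) + 1) ^ a := by
      have heq : n₀ + (m + 1) = (n₀ + m) + 1 := by ring
      rw [heq]; exact hFsucc (n₀ + m)
    rw [h2]
    have := mul_le_mul_of_nonneg_right (hI m).1 (hFpos (n₀ + m)).le
    nlinarith [this]
  have hBsanti : ∀ m : ℕ, Bs (m + 1) < Bs m := by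
    intro m
    rw [hBsdef]
    simp only
    rw [div_lt_div_iff₀ (hFpos _) (hFpos _)]
    have h2 : (((n₀ + (m+1))! : ℕ) : ℝ) ^ a =
        (((n₀ + m)! : ℕ) : ℝ) ^ a * (((n₀ + m : ℕ) : ℝ) + 1) ^ a := by
      have heq : n₀ + (m + 1) = (n₀ + m) + 1 := by ring
      rw [heq]; exact hFsucc (n₀ + m)
    rw [h2]
    have h3 : ((q (m+1) : ℝ) + 1) < ((q m : ℝ) + 1) * (((n₀ + m : ℕ) : ℝ) + 1) ^ a := by
      linarith [(hI m).2]
    have := mul_lt_mul_of_pos_right h3 (hFpos (n₀ + m))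
    nlinarith [this]
  have hBsanti' : Antitone Bs := antitone_nat_of_succ_le fun m => (hBsanti m).le
  have hAltBs : ∀ m : ℕ, A m < Bs m := by
    intro m
    rw [hAdef, hBsdef]
    simp only
    rw [div_lt_div_iff_of_pos_right (hFpos _)]
    linarith
  have hAB : ∀ i j : ℕ, A i ≤ Bs j := by
    intro i j
    have h := lt_of_le_of_lt (hAmono (le_max_left i j)) (hAltBs (max i j))
    exact h.le.trans (hBsanti' (le_max_right i j))
  have hbdd : BddAbove (Set.range A) := ⟨Bs 0, by rintro y ⟨i, rfl⟩; exact hAB i 0⟩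
  set B : ℝ := ⨆ m, A m with hBdef
  have hAleB : ∀ m : ℕ, A m ≤ B := fun m => le_ciSup hbdd m
  have hBltBs : ∀ m : ℕ, B < Bs m := by
    intro m
    have h1 : B ≤ Bs (m + 1) := ciSup_le fun i => hAB i (m + 1)
    exact lt_of_le_of_lt h1 (hBsanti m)
  have hBpos : 0 < B := by
    have h1 : A 0 ≤ B := hAleB 0
    have h2 : 0 < A 0 := by
      rw [hAdef]
      simp only
      apply div_pos ?_ (hFpos _)
      rw [hq0]; norm_num
    linarith
  -- floor identity
  have hfloor : ∀ n : ℕ, n₀ ≤ n → ⌊B * ((n ! : ℕ) : ℝ) ^ a⌋ = (q (n - n₀) : ℤ) := by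
    intro n hn
    obtain ⟨m, rfl⟩ : ∃ m, n = n₀ + m := ⟨n - n₀, by omega⟩
    have hm : n₀ + m - n₀ = m := by omega
    rw [hm]
    rw [Int.floor_eq_iff]
    constructor
    · have h1 := mul_le_mul_of_nonneg_right (hAleB m) (hFpos (n₀ + m)).le
      rw [hAdef] at h1
      simp only at h1
      rw [div_mul_cancel₀ _ (hFpos (n₀ + m)).ne'] at h1
      push_cast
      linarith
    · have h1 := mul_lt_mul_of_pos_right (hBltBs m) (hFpos (n₀ + m))
      rw [hBsdef] at h1
      simp only at h1
      rw [div_mul_cancel₀ _ (hFpos (n₀ + m)).ne'] at h1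
      push_cast
      linarith
  -- strict monotonicity of q
  have hqlt : ∀ m : ℕ, q m < q (m + 1) := by
    intro m
    have h1 := (hI m).1
    have hn2 : (2:ℝ) ≤ ((n₀ + m : ℕ) : ℝ) := by
      have : 2 ≤ n₀ + m := le_trans hn₀2 (Nat.le_add_right _ _)
      exact_mod_cast this
    have hbase1 : (1:ℝ) ≤ ((n₀ + m : ℕ) : ℝ) + 1 := by linarith
    have h2 : ((n₀ + m : ℕ) : ℝ) + 1 ≤ (((n₀ + m : ℕ) : ℝ) + 1) ^ a := by
      nth_rewrite 1 [← Real.rpow_one (((n₀ + m : ℕ) : ℝ) + 1)]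
      exact Real.rpow_le_rpow_of_exponent_le hbase1 ha1.le
    have hq1 : (1:ℝ) ≤ (q m : ℝ) := by
      have := (hQ m).1.two_le
      have : (2:ℝ) ≤ (q m : ℝ) := by exact_mod_cast this
      linarith
    have h3 : (q m : ℝ) < (q m : ℝ) * (((n₀ + m : ℕ) : ℝ) + 1) ^ a := by
      have hp1 : (1:ℝ) < (((n₀ + m : ℕ) : ℝ) + 1) ^ a := by linarith
      calc (q m : ℝ) = (q m : ℝ) * 1 := (mul_one _).symm
        _ < (q m : ℝ) * (((n₀ + m : ℕ) : ℝ) + 1) ^ a :=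
            mul_lt_mul_of_pos_left hp1 (by linarith)
    have h4 : (q m : ℝ) < (q (m + 1) : ℝ) := lt_of_lt_of_le h3 h1
    exact_mod_cast h4
  refine ⟨n₀, le_trans one_le_two hn₀2, B, hBpos, ?_, ?_⟩
  · intro n hn
    rw [show (((n:ℕ)! : ℝ)) = (((n ! : ℕ)) : ℝ) from rfl]
    rw [hfloor n hn, hfloor (n + 1) (by omega)]
    have h1 : n + 1 - n₀ = (n - n₀) + 1 := by omega
    rw [h1]
    exact_mod_cast hqlt (n - n₀)
  · intro n hn
    rw [hfloor n hn]
    exact Nat.prime_iff_prime_int.mp (hQ (n - n₀)).1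
end

section
/- Assume there exists N ∈ ℕ such that p_{n+1} − p_n ≤ p_n^{2/3} − 1 for every n ≥ N. Then there exists a real A > 1 such that the sequence (⌊A^{3^n}⌋)_{n ≥ 1} is strictly increasing and ⌊A^{3^n}⌋ is a prime number for every integer n ≥ 1. -/
open Real

private lemma mills_next_prime
    (N : ℕ)
    (hN : ∀ n : ℕ, N ≤ n →
      ((Nat.nth Nat.Prime (n + 1) : ℝ) - (Nat.nth Nat.Prime n : ℝ)) ≤
        (Nat.nth Nat.Prime n : ℝ) ^ ((2 : ℝ) / 3) - 1)
    (p : ℕ) (hp : p.Prime) (hPNp : Nat.nth Nat.Prime N ≤ p) :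
    ∃ q : ℕ, q.Prime ∧ Nat.nth Nat.Prime N ≤ q ∧ p ^ 3 < q ∧ q + 1 < (p + 1) ^ 3 := by
  classical
  have hinf : (setOf Nat.Prime).Infinite := Nat.infinite_setOf_prime
  have hp2 : 2 ≤ p := hp.two_le
  have hplt : p < p ^ 3 := by
    calc p = p ^ 1 := (pow_one p).symm
      _ < p ^ 3 := Nat.pow_lt_pow_right hp.one_lt (by norm_num)
  have hcube_np : ¬ (p ^ 3).Prime := by
    intro h
    rcases h.eq_one_or_self_of_dvd p (dvd_pow_self p (by norm_num)) with h1 | h2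
    · omega
    · nlinarith
  set c := Nat.count Nat.Prime (p ^ 3) with hc
  have hc1 : 1 ≤ c := by
    have := Nat.count_strict_mono (p := Nat.Prime) hp hplt
    omega
  set m := c - 1 with hm
  have hmc : m + 1 = c := by omega
  have hm_lt : Nat.nth Nat.Prime m < p ^ 3 :=
    Nat.nth_lt_of_lt_count (by omega)
  set q := Nat.nth Nat.Prime (m + 1) with hqdef
  have hq_prime : q.Prime := Nat.nth_mem_of_infinite hinf (m + 1)
  have hq_gt : p ^ 3 < q := by
    have h1 : p ^ 3 ≤ q := by
      rw [hqdef, hmc, hc]; exact Nat.le_nth_count hinf (p ^ 3)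
    rcases h1.eq_or_lt with h | h
    · exact absurd (h ▸ hq_prime) hcube_np
    · exact h
  -- p ≤ nth m
  have hp_le_nthm : p ≤ Nat.nth Nat.Prime m := by
    have h1 : Nat.count Nat.Prime (p + 1) = Nat.count Nat.Prime p + 1 := by
      rw [Nat.count_succ, if_pos hp]
    have h2 : Nat.count Nat.Prime (p + 1) ≤ c := by
      exact Nat.count_monotone _ (by nlinarith)
    have h3 : Nat.count Nat.Prime p ≤ m := by omega
    calc p = Nat.nth Nat.Prime (Nat.count Nat.Prime p) := (Nat.nth_count hp).symm
      _ ≤ Nat.nth Nat.Prime m := Nat.nth_monotone hinf h3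
  have hNm : N ≤ m := by
    by_contra hcon
    push_neg at hcon
    have := Nat.nth_lt_nth hinf (k := m) (n := N) |>.mpr hcon
    omega
  have hgapm := hN m hNm
  rw [← hqdef] at hgapm
  -- rpow bound
  have hnn : (0 : ℝ) ≤ (Nat.nth Nat.Prime m : ℝ) := by positivity
  have hle : (Nat.nth Nat.Prime m : ℝ) ≤ ((p : ℝ) ^ 3) := by
    exact_mod_cast hm_lt.le
  have hrb : (Nat.nth Nat.Prime m : ℝ) ^ ((2 : ℝ) / 3) ≤ (p : ℝ) ^ 2 := by
    have h1 : (Nat.nth Nat.Prime m : ℝ) ^ ((2 : ℝ) / 3) ≤ ((p : ℝ) ^ 3) ^ ((2 : ℝ) / 3) :=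
      Real.rpow_le_rpow hnn hle (by norm_num)
    have h2 : ((p : ℝ) ^ 3) ^ ((2 : ℝ) / 3) = (p : ℝ) ^ 2 := by
      rw [← Real.rpow_natCast (p : ℝ) 3, ← Real.rpow_mul (by positivity)]
      norm_num
    linarith
  have hnth_le : (Nat.nth Nat.Prime m : ℝ) ≤ (p : ℝ) ^ 3 - 1 := by
    have : (Nat.nth Nat.Prime m : ℝ) + 1 ≤ ((p ^ 3 : ℕ) : ℝ) := by
      exact_mod_cast hm_lt
    push_cast at this
    linarith
  have hq_real : (q : ℝ) + 1 < ((p : ℝ) + 1) ^ 3 := by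
    have hp_real : (2 : ℝ) ≤ (p : ℝ) := by exact_mod_cast hp2
    nlinarith [hgapm, hrb, hnth_le]
  have hq_ub : q + 1 < (p + 1) ^ 3 := by exact_mod_cast (by push_cast; linarith : ((q + 1 : ℕ) : ℝ) < (((p + 1) ^ 3 : ℕ) : ℝ))
  exact ⟨q, hq_prime, by omega, hq_gt, hq_ub⟩

/-- Mills' theorem, derived from the prime-gap bound p_{n+1} − p_n ≤ p_n^{2/3} − 1
(a consequence of Ingham's estimate). -/
theorem stmt_5
    (hgap : ∃ N : ℕ, ∀ n : ℕ, N ≤ n →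
      ((Nat.nth Nat.Prime (n + 1) : ℝ) - (Nat.nth Nat.Prime n : ℝ)) ≤
        (Nat.nth Nat.Prime n : ℝ) ^ ((2 : ℝ) / 3) - 1) :
    ∃ A : ℝ, 1 < A ∧
      (∀ n : ℕ, 1 ≤ n → ⌊A ^ (3 ^ n : ℕ)⌋ < ⌊A ^ (3 ^ (n + 1) : ℕ)⌋) ∧
      (∀ n : ℕ, 1 ≤ n → Prime ⌊A ^ (3 ^ n : ℕ)⌋) := by
  classical
  obtain ⟨N, hN⟩ := hgap
  have hinf : (setOf Nat.Prime).Infinite := Nat.infinite_setOf_prime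
  set PN := Nat.nth Nat.Prime N with hPNdef
  have hPNprime : PN.Prime := Nat.nth_mem_of_infinite hinf N
  -- the subtype of large primes
  have step : ∀ t : {x : ℕ // x.Prime ∧ PN ≤ x}, ∃ s : {x : ℕ // x.Prime ∧ PN ≤ x},
      (t : ℕ) ^ 3 < (s : ℕ) ∧ (s : ℕ) + 1 < ((t : ℕ) + 1) ^ 3 := by
    rintro ⟨t, ht, htPN⟩
    obtain ⟨q, hq, hqPN, h1, h2⟩ := mills_next_prime N hN t ht htPN
    exact ⟨⟨q, hq, hqPN⟩, h1, h2⟩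
  choose G hG1 hG2 using step
  set t0 : {x : ℕ // x.Prime ∧ PN ≤ x} := ⟨PN, hPNprime, le_rfl⟩ with ht0
  set q : ℕ → ℕ := fun k => ((G^[k] t0 : {x : ℕ // x.Prime ∧ PN ≤ x}) : ℕ) with hqdef
  have hq_prime : ∀ k, (q k).Prime := fun k => (G^[k] t0).2.1
  have hq2 : ∀ k, 2 ≤ q k := fun k => (hq_prime k).two_le
  have hq_step1 : ∀ k, q k ^ 3 < q (k + 1) := by
    intro k
    have := hG1 (G^[k] t0)
    simpa [hqdef, Function.iterate_succ_apply'] using this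
  have hq_step2 : ∀ k, q (k + 1) + 1 < (q k + 1) ^ 3 := by
    intro k
    have := hG2 (G^[k] t0)
    simpa [hqdef, Function.iterate_succ_apply'] using this
  -- real sequences
  set e : ℕ → ℝ := fun k => ((3 : ℝ) ^ (k + 1))⁻¹ with hedef
  have he_pos : ∀ k, 0 < e k := fun k => by positivity
  set u : ℕ → ℝ := fun k => (q k : ℝ) ^ (e k) with hudef
  set v : ℕ → ℝ := fun k => ((q k : ℝ) + 1) ^ (e k) with hvdef
  -- helper: (x ^ e k) ^ (3^(k+1) : ℕ) = x for 0 ≤ x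
  have hpow : ∀ (k : ℕ) (x : ℝ), 0 ≤ x → (x ^ (e k)) ^ ((3 : ℕ) ^ (k + 1)) = x := by
    intro k x hx
    have h3 : (((3 : ℕ) ^ (k + 1) : ℕ) : ℝ) = (3 : ℝ) ^ (k + 1) := by push_cast; ring
    rw [← Real.rpow_natCast (x ^ (e k)) (3 ^ (k + 1)), ← Real.rpow_mul hx, h3]
    simp only [hedef]
    rw [inv_mul_cancel₀ (by positivity), Real.rpow_one]
  -- cube relation: x ^ e k = (x^3) ^ e (k+1)
  have hcube : ∀ (k : ℕ) (x : ℝ), 0 ≤ x → (x ^ (3 : ℕ)) ^ (e (k + 1)) = x ^ (e k) := by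
    intro k x hx
    rw [← Real.rpow_natCast x 3, ← Real.rpow_mul hx]
    congr 1
    rw [hedef]
    push_cast
    rw [pow_succ ((3:ℝ)) (k+1)]
    field_simp
  have hu_lt : ∀ k, u k < u (k + 1) := by
    intro k
    have h1 : ((q k : ℝ)) ^ (3 : ℕ) < (q (k + 1) : ℝ) := by exact_mod_cast hq_step1 k
    calc u k = ((q k : ℝ) ^ (3 : ℕ)) ^ (e (k + 1)) := (hcube k _ (by positivity)).symm
      _ < (q (k + 1) : ℝ) ^ (e (k + 1)) :=
        Real.rpow_lt_rpow (by positivity) h1 (he_pos _)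
      _ = u (k + 1) := rfl
  have hv_lt : ∀ k, v (k + 1) < v k := by
    intro k
    have h1 : (q (k + 1) : ℝ) + 1 < ((q k : ℝ) + 1) ^ (3 : ℕ) := by
      exact_mod_cast hq_step2 k
    calc v (k + 1) = ((q (k + 1) : ℝ) + 1) ^ (e (k + 1)) := rfl
      _ < (((q k : ℝ) + 1) ^ (3 : ℕ)) ^ (e (k + 1)) :=
        Real.rpow_lt_rpow (by positivity) h1 (he_pos _)
      _ = v k := hcube k _ (by positivity)
  have huv : ∀ k, u k < v k := by
    intro k
    exact Real.rpow_lt_rpow (by positivity) (by norm_num) (he_pos k)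
  have hu_mono : Monotone u := monotone_nat_of_le_succ (fun k => (hu_lt k).le)
  have hv_anti : Antitone v := antitone_nat_of_succ_le (fun k => (hv_lt k).le)
  have hujk : ∀ j k, u j < v k := by
    intro j k
    rcases le_total j k with h | h
    · exact lt_of_le_of_lt (hu_mono h) (huv k)
    · exact lt_of_lt_of_le (huv j) (hv_anti h)
  have hbdd : BddAbove (Set.range u) := by
    refine ⟨v 0, ?_⟩
    rintro x ⟨j, rfl⟩
    exact (hujk j 0).le
  set A : ℝ := ⨆ k, u k with hAdef
  have hA_ge : ∀ k, u k ≤ A := fun k => le_ciSup hbdd k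
  have hA_le : ∀ k, A ≤ v k := fun k => ciSup_le (fun j => (hujk j k).le)
  have hA_lt : ∀ k, A < v k := fun k => lt_of_le_of_lt (hA_le (k + 1)) (hv_lt k)
  have hu0 : 1 < u 0 := by
    simp only [hudef]
    have h2 : (2 : ℝ) ≤ (q 0 : ℝ) := by exact_mod_cast hq2 0
    have := Real.one_lt_rpow_iff_of_pos (x := (q 0 : ℝ)) (by linarith) (y := e 0)
    exact this.mpr (Or.inl ⟨by linarith, he_pos 0⟩)
  have hA1 : 1 < A := lt_of_lt_of_le hu0 (hA_ge 0)
  have hA0 : (0 : ℝ) ≤ A := by linarith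
  -- floor computation
  have hfloor : ∀ k, ⌊A ^ ((3 : ℕ) ^ (k + 1))⌋ = (q k : ℤ) := by
    intro k
    have hlo : (q k : ℝ) ≤ A ^ ((3 : ℕ) ^ (k + 1)) := by
      calc (q k : ℝ) = (u k) ^ ((3 : ℕ) ^ (k + 1)) := (hpow k _ (by positivity)).symm
        _ ≤ A ^ ((3 : ℕ) ^ (k + 1)) :=
          pow_le_pow_left₀ (Real.rpow_nonneg (by positivity) _) (hA_ge k) _
    have hhi : A ^ ((3 : ℕ) ^ (k + 1)) < (q k : ℝ) + 1 := by
      calc A ^ ((3 : ℕ) ^ (k + 1)) < (v k) ^ ((3 : ℕ) ^ (k + 1)) :=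
            pow_lt_pow_left₀ (hA_lt k) hA0 (by positivity)
        _ = (q k : ℝ) + 1 := hpow k _ (by positivity)
    rw [Int.floor_eq_iff]
    constructor
    · exact_mod_cast hlo
    · push_cast
      exact hhi
  refine ⟨A, hA1, ?_, ?_⟩
  · intro n hn
    obtain ⟨k, rfl⟩ := Nat.exists_eq_add_of_le hn
    rw [show 1 + k = k + 1 by ring, hfloor k, hfloor (k + 1)]
    have : q k < q (k + 1) := by
      calc q k ≤ q k ^ 3 := Nat.le_self_pow (by norm_num) _
        _ < q (k + 1) := hq_step1 k
    exact_mod_cast this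
  · intro n hn
    obtain ⟨k, rfl⟩ := Nat.exists_eq_add_of_le hn
    rw [show 1 + k = k + 1 by ring, hfloor k]
    rw [Int.prime_iff_natAbs_prime]
    simpa using hq_prime k
end

section
/- Assume there exists N ∈ ℕ such that p_{n+1} − p_n ≤ (log 2)·p_n − 1 for every n ≥ N. Then there exists a real α > 0 such that, defining the sequence (a_n)_{n ∈ ℕ} by a_0 = α and a_{n+1} = 2^{a_n} for all n, the sequence (⌊a_n⌋)_{n ∈ ℕ} is strictly increasing and ⌊a_n⌋ is a prime number for every n ∈ ℕ. -/
/-!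
Bertrand's postulate puts a prime in `[2 ^ k, 2 ^ (k + 1) - 1)` for every `k ≥ 1`, so starting
from `2` one gets primes `q 0 < q 1 < ⋯` with `2 ^ q n ≤ q (n + 1)` and
`q (n + 1) + 1 < 2 ^ (q n + 1)`. Writing `T = (2 ^ ·)`, these inequalities say exactly that
the preimages under `T^[n]` of the intervals `[q n, q n + 1]` are nested, with the right
endpoints strictly decreasing; any `α` in all of them has `⌊T^[n] α⌋ = q n`.
-/

open Real

theorem exists_prime_two_pow_le_and_add_one_lt_two_pow_succ {k : ℕ} (hk : k ≠ 0) :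
    ∃ p, p.Prime ∧ 2 ^ k ≤ p ∧ p + 1 < 2 ^ (k + 1) := by
  have hk : 1 < 2 ^ k := Nat.one_lt_two_pow hk
  obtain ⟨p, hp, hlt, hle⟩ := Nat.exists_prime_lt_and_le_two_mul (2 ^ k - 1) (by omega)
  exact ⟨p, hp, by omega, by rw [pow_succ]; omega⟩

theorem exists_prime_seq_two_pow_le_and_add_one_lt :
    ∃ q : ℕ → ℕ, (∀ n, (q n).Prime) ∧
      ∀ n, 2 ^ q n ≤ q (n + 1) ∧ q (n + 1) + 1 < 2 ^ (q n + 1) := by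
  choose f hf using fun p : {p : ℕ // p.Prime} ↦
    exists_prime_two_pow_le_and_add_one_lt_two_pow_succ p.prop.ne_zero
  let next : {p : ℕ // p.Prime} → {p : ℕ // p.Prime} := fun p ↦ ⟨f p, (hf p).1⟩
  refine ⟨fun n ↦ next^[n] ⟨2, Nat.prime_two⟩, fun n ↦ (next^[n] _).prop, fun n ↦ ?_⟩
  dsimp only
  rw [Function.iterate_succ_apply']
  exact (hf _).2

theorem exists_iterate_rpow_eq_of_le {b : ℝ} (hb : 1 < b) {q : ℕ → ℤ}
    (hlow : ∀ n, b ^ (q n : ℝ) ≤ q (n + 1)) (n : ℕ) {y : ℝ} (hy : (q n : ℝ) ≤ y) :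
    ∃ x, (b ^ · : ℝ → ℝ)^[n] x = y := by
  induction n generalizing y with
  | zero => exact ⟨y, rfl⟩
  | succ n ih =>
    have hby : b ^ (q n : ℝ) ≤ y := (hlow n).trans hy
    have hy0 : 0 < y := (rpow_pos_of_pos (by linarith) _).trans_le hby
    obtain ⟨x, hx⟩ := ih ((le_logb_iff_rpow_le hb hy0).2 hby)
    exact ⟨x, by rw [Function.iterate_succ_apply', hx, rpow_logb (by linarith) hb.ne' hy0]⟩

theorem exists_floor_iterate_rpow_eq {b : ℝ} (hb : 1 < b) (q : ℕ → ℤ)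
    (hlow : ∀ n, b ^ (q n : ℝ) ≤ q (n + 1))
    (hup : ∀ n, (q (n + 1) : ℝ) + 1 < b ^ ((q n : ℝ) + 1)) :
    ∃ α, ∀ n, ⌊(b ^ · : ℝ → ℝ)^[n] α⌋ = q n := by
  have hT : StrictMono (b ^ · : ℝ → ℝ) := strictMono_rpow_of_base_gt_one hb
  choose u hu using fun n ↦ exists_iterate_rpow_eq_of_le hb hlow n (le_refl (q n : ℝ))
  choose v hv using fun n ↦
    exists_iterate_rpow_eq_of_le hb hlow n (le_add_of_nonneg_right zero_le_one)
  have hu_mono : Monotone u := monotone_nat_of_le_succ fun n ↦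
    (hT.iterate (n + 1)).le_iff_le.1 (by rw [hu, Function.iterate_succ_apply', hu]; exact hlow n)
  have hv_anti : StrictAnti v := strictAnti_nat_of_succ_lt fun n ↦
    (hT.iterate (n + 1)).lt_iff_lt.1 (by rw [hv, Function.iterate_succ_apply', hv]; exact hup n)
  have huv : u ≤ v := fun n ↦ (hT.iterate n).le_iff_le.1 (by rw [hu, hv]; linarith)
  have hα := Set.mem_iInter.1 (hu_mono.ciSup_mem_iInter_Icc_of_antitone hv_anti.antitone huv)
  refine ⟨⨆ n, u n, fun n ↦ Int.floor_eq_iff.2 ⟨?_, ?_⟩⟩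
  · rw [← hu n]
    exact (hT.iterate n).monotone (hα n).1
  · rw [← hv n]
    exact hT.iterate n ((hα (n + 1)).2.trans_lt (hv_anti n.lt_succ_self))

theorem stmt_6_general :
    ∃ α : ℝ, 0 < α ∧ ∀ a : ℕ → ℝ, a 0 = α → (∀ n : ℕ, a (n + 1) = (2 : ℝ) ^ (a n)) →
      (∀ n : ℕ, ⌊a n⌋ < ⌊a (n + 1)⌋) ∧ (∀ n : ℕ, Prime ⌊a n⌋) := by
  obtain ⟨q, hq_prime, hq_step⟩ := exists_prime_seq_two_pow_le_and_add_one_lt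
  obtain ⟨α, hα⟩ := exists_floor_iterate_rpow_eq one_lt_two (fun n ↦ (q n : ℤ))
    (fun n ↦ by push_cast; exact_mod_cast (hq_step n).1)
    (fun n ↦ by push_cast; exact_mod_cast (hq_step n).2)
  refine ⟨α, ?_, fun a ha0 ha ↦ ?_⟩
  · have h0 : ⌊α⌋ = q 0 := hα 0
    exact one_pos.trans_le (Int.floor_pos.1 (by rw [h0]; exact_mod_cast (hq_prime 0).pos))
  have ha_iter : ∀ n, a n = (2 ^ · : ℝ → ℝ)^[n] α := fun n ↦ by
    induction n with
    | zero => exact ha0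
    | succ n ih => rw [ha, ih, Function.iterate_succ_apply']
  have ha_floor : ∀ n, ⌊a n⌋ = q n := fun n ↦ by rw [ha_iter, hα]
  refine ⟨fun n ↦ ?_, fun n ↦ ?_⟩
  · rw [ha_floor, ha_floor]
    exact_mod_cast (Nat.lt_two_pow_self).trans_le (hq_step n).1
  · rw [ha_floor]
    exact Nat.prime_iff_prime_int.mp (hq_prime n)

/-- Wright's theorem, derived from the prime-gap bound p_{n+1} − p_n ≤ (log 2)·p_n − 1
(a consequence of Chebyshev's theorem): there is α > 0 such that all the integer parts of
the tower sequence α, 2^α, 2^(2^α), … are prime, and they are strictly increasing. -/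
theorem stmt_6
    (hgap : ∃ N : ℕ, ∀ n : ℕ, N ≤ n →
      ((Nat.nth Nat.Prime (n + 1) : ℝ) - (Nat.nth Nat.Prime n : ℝ)) ≤
        Real.log 2 * (Nat.nth Nat.Prime n : ℝ) - 1) :
    ∃ α : ℝ, 0 < α ∧ ∀ a : ℕ → ℝ, a 0 = α → (∀ n : ℕ, a (n + 1) = (2 : ℝ) ^ (a n)) →
      (∀ n : ℕ, ⌊a n⌋ < ⌊a (n + 1)⌋) ∧ (∀ n : ℕ, Prime ⌊a n⌋) :=
  stmt_6_general
end

section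
/- Assume that p_{n+1} − p_n ≤ 2·√(p_n) − 1 for every n ∈ ℕ. Then there exists a real B > 1 such that the sequence (⌊B^{2^n}⌋)_{n ≥ 1} is strictly increasing and ⌊B^{2^n}⌋ is a prime number for every integer n ≥ 1. -/
open Real

/-- Auxiliary: iterate a choice function starting from 2. -/
def stmt7Seq (P : ℕ → ℕ) : ℕ → ℕ
  | 0 => 2
  | n + 1 => P (stmt7Seq P n)

/-- Under the quantitative form p_{n+1} − p_n ≤ 2√(p_n) − 1 of the conjecture that between
consecutive squares there is always a prime, there is B > 1 with ⌊B^(2^n)⌋ prime for all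
n ≥ 1 and strictly increasing. -/
theorem stmt_7
    (hgap : ∀ n : ℕ,
      ((Nat.nth Nat.Prime (n + 1) : ℝ) - (Nat.nth Nat.Prime n : ℝ)) ≤
        2 * Real.sqrt (Nat.nth Nat.Prime n) - 1) :
    ∃ B : ℝ, 1 < B ∧
      (∀ n : ℕ, 1 ≤ n → ⌊B ^ (2 ^ n : ℕ)⌋ < ⌊B ^ (2 ^ (n + 1) : ℕ)⌋) ∧
      (∀ n : ℕ, 1 ≤ n → Prime ⌊B ^ (2 ^ n : ℕ)⌋) := by
  classical
  -- Step 1: for every N there is a prime p with N² ≤ p and p + 2 ≤ (N+1)² (when 1 ≤ N)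
  have key : ∀ N : ℕ, ∃ p : ℕ, p.Prime ∧ (1 ≤ N → N ^ 2 ≤ p ∧ p + 2 ≤ (N + 1) ^ 2) := by
    intro N
    rcases lt_or_ge N 2 with hN | hN
    · refine ⟨2, Nat.prime_two, fun h => ?_⟩
      interval_cases N
      · omega
    · -- 2 ≤ N
      have hsm := Nat.nth_strictMono Nat.infinite_setOf_prime
      have hex : ∃ m, N ^ 2 ≤ Nat.nth Nat.Prime m := ⟨N ^ 2, hsm.le_apply⟩
      set m := Nat.find hex with hmdef
      have hm : N ^ 2 ≤ Nat.nth Nat.Prime m := Nat.find_spec hex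
      have hm0 : m ≠ 0 := by
        intro h
        have h2 : Nat.nth Nat.Prime 0 = 2 := Nat.nth_count Nat.prime_two
        rw [h, h2] at hm
        nlinarith
      obtain ⟨m', hm'⟩ := Nat.exists_eq_succ_of_ne_zero hm0
      rw [hm'] at hm
      have hlt : Nat.nth Nat.Prime m' < N ^ 2 := by
        have := Nat.find_min hex (m := m') (by omega)
        omega
      have hg := hgap m'
      have hsq : Real.sqrt (Nat.nth Nat.Prime m') < (N : ℝ) := by
        rw [Real.sqrt_lt' (by positivity)]
        exact_mod_cast by push_cast; exact_mod_cast hlt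
      refine ⟨Nat.nth Nat.Prime (m' + 1), Nat.prime_nth_prime _, fun _ => ⟨hm, ?_⟩⟩
      have hreal : ((Nat.nth Nat.Prime (m' + 1) : ℕ) : ℝ) <
          ((N : ℝ)) ^ 2 + 2 * N - 2 := by
        have hb : ((Nat.nth Nat.Prime m' : ℕ) : ℝ) ≤ ((N : ℝ)) ^ 2 - 1 := by
          have h1 : Nat.nth Nat.Prime m' + 1 ≤ N ^ 2 := hlt
          have h2 : ((Nat.nth Nat.Prime m' + 1 : ℕ) : ℝ) ≤ ((N ^ 2 : ℕ) : ℝ) := by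
            exact_mod_cast h1
          push_cast at h2
          linarith
        nlinarith [hg, hsq, hb]
      have hnat : Nat.nth Nat.Prime (m' + 1) + 2 ≤ N ^ 2 + 2 * N := by
        by_contra hcon
        push_neg at hcon
        have : ((N : ℝ)) ^ 2 + 2 * N - 1 ≤ ((Nat.nth Nat.Prime (m' + 1) : ℕ) : ℝ) := by
          have : (N ^ 2 + 2 * N - 1 : ℕ) ≤ Nat.nth Nat.Prime (m' + 1) := by omega
          have h2 : ((N ^ 2 + 2 * N - 1 : ℕ) : ℝ) = (N : ℝ) ^ 2 + 2 * N - 1 := by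
            have : 1 ≤ N ^ 2 + 2 * N := by nlinarith
            push_cast [Nat.cast_sub this]
            ring
          rw [← h2]
          exact_mod_cast this
        linarith
      nlinarith [hnat]
  choose P hP using key
  -- Step 2: the Mills-type sequence
  set q : ℕ → ℕ := stmt7Seq P with hqdef
  have hqs : ∀ n, q (n + 1) = P (q n) := fun n => rfl
  have hq2 : ∀ n, 2 ≤ q n := by
    intro n
    induction n with
    | zero => exact le_refl 2
    | succ n ih =>
      rw [hqs]
      have h := (hP (q n)).2 (by omega)
      nlinarith [h.1]
  have hqprime : ∀ n, (q n).Prime := by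
    intro n
    cases n with
    | zero => exact Nat.prime_two
    | succ n => rw [hqs]; exact (hP (q n)).1
  have hlow : ∀ n, (q n) ^ 2 ≤ q (n + 1) := by
    intro n; rw [hqs]; exact ((hP (q n)).2 (by have := hq2 n; omega)).1
  have hhigh : ∀ n, q (n + 1) + 2 ≤ (q n + 1) ^ 2 := by
    intro n; rw [hqs]; exact ((hP (q n)).2 (by have := hq2 n; omega)).2
  -- Step 3: real sequences
  set k : ℕ → ℕ := fun n => 2 ^ (n + 1) with hk
  have hk0 : ∀ n, k n ≠ 0 := fun n => by positivity
  set u : ℕ → ℝ := fun n => (q n : ℝ) ^ ((k n : ℝ)⁻¹) with hu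
  set v : ℕ → ℝ := fun n => ((q n : ℝ) + 1) ^ ((k n : ℝ)⁻¹) with hv
  have hqpos : ∀ n, (0:ℝ) < (q n : ℝ) := fun n => by
    have := hq2 n
    exact_mod_cast (by omega : 0 < q n)
  have hupos : ∀ n, 0 < u n := fun n => by
    have := hqpos n
    positivity
  have hvpos : ∀ n, 0 < v n := fun n => by positivity
  have hupow : ∀ n, (u n) ^ (k n) = (q n : ℝ) :=
    fun n => Real.rpow_inv_natCast_pow (by positivity) (hk0 n)
  have hvpow : ∀ n, (v n) ^ (k n) = (q n : ℝ) + 1 :=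
    fun n => Real.rpow_inv_natCast_pow (by positivity) (hk0 n)
  have hksucc : ∀ n, k (n + 1) = k n * 2 := fun n => by
    simp [hk, pow_succ]
  have humono : Monotone u := by
    apply monotone_nat_of_le_succ
    intro n
    rw [← pow_le_pow_iff_left₀ (hupos n).le (hupos (n + 1)).le (hk0 (n + 1))]
    rw [hupow (n + 1), hksucc n, pow_mul, hupow n]
    exact_mod_cast hlow n
  have hvanti : ∀ n, v (n + 1) < v n := by
    intro n
    rw [← pow_lt_pow_iff_left₀ (hvpos (n + 1)).le (hvpos n).le (hk0 (n + 1))]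
    rw [hvpow (n + 1), hksucc n, pow_mul, hvpow n]
    have h1 : (q (n + 1) : ℝ) + 1 < ((q n : ℝ) + 1) ^ 2 := by
      have := hhigh n
      have : ((q (n + 1) + 2 : ℕ) : ℝ) ≤ (((q n + 1) ^ 2 : ℕ) : ℝ) := by exact_mod_cast this
      push_cast at this
      linarith
    exact h1
  have hvantiM : Antitone v := antitone_nat_of_succ_le fun n => (hvanti n).le
  have hulv : ∀ n, u n < v n := by
    intro n
    rw [← pow_lt_pow_iff_left₀ (hupos n).le (hvpos n).le (hk0 n), hupow, hvpow]
    linarith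
  have huv : ∀ m n, u m ≤ v n := by
    intro m n
    calc u m ≤ u (max m n) := humono (le_max_left m n)
      _ ≤ v (max m n) := (hulv _).le
      _ ≤ v n := hvantiM (le_max_right m n)
  have hbdd : BddAbove (Set.range u) := by
    refine ⟨v 0, ?_⟩
    rintro x ⟨m, rfl⟩
    exact huv m 0
  have hle : ∀ n, u n ≤ ⨆ n, u n := fun n => le_ciSup hbdd n
  have hBv : ∀ n, (⨆ n, u n) < v n := fun n =>
    lt_of_le_of_lt (ciSup_le fun m => huv m (n + 1)) (hvanti n)
  have hB0 : (0:ℝ) ≤ ⨆ n, u n := le_trans (hupos 0).le (hle 0)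
  have hfloor : ∀ m : ℕ, ⌊(⨆ n, u n) ^ (2 ^ (m + 1) : ℕ)⌋ = (q m : ℤ) := by
    intro m
    have h1 : (q m : ℝ) ≤ (⨆ n, u n) ^ (k m) := by
      rw [← hupow m]
      exact pow_le_pow_left₀ (hupos m).le (hle m) _
    have h2 : (⨆ n, u n) ^ (k m) < (q m : ℝ) + 1 := by
      rw [← hvpow m]
      exact pow_lt_pow_left₀ (hBv m) hB0 (hk0 m)
    rw [show (2 ^ (m + 1) : ℕ) = k m from rfl]
    rw [Int.floor_eq_iff]
    constructor
    · exact_mod_cast h1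
    · push_cast
      exact h2
  refine ⟨⨆ n, u n, ?_, ?_, ?_⟩
  · have h1 : u 0 ≤ ⨆ n, u n := le_ciSup hbdd 0
    have h2 : 1 < u 0 := by
      rw [hu]
      rw [Real.one_lt_rpow_iff_of_pos (hqpos 0)]
      left
      constructor
      · have : (2:ℝ) ≤ ((q 0 : ℕ) : ℝ) := by exact_mod_cast hq2 0
        linarith
      · have := hk0 0
        positivity
    linarith
  · intro n hn
    obtain ⟨m, rfl⟩ := Nat.exists_eq_add_of_le hn
    simp only [Nat.add_comm 1 m]
    rw [hfloor m, hfloor (m + 1)]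
    have h1 := hlow m
    have h2 := hq2 m
    have : q m < q (m + 1) := by nlinarith
    exact_mod_cast this
  · intro n hn
    obtain ⟨m, rfl⟩ := Nat.exists_eq_add_of_le hn
    simp only [Nat.add_comm 1 m]
    rw [hfloor m]
    exact Nat.prime_iff_prime_int.mp (hqprime m)
end

section
/- Let (J_n)_{n ∈ ℕ} be a sequence of nonempty open intervals of ℝ and (h_n)_{n ∈ ℕ} a sequence of functions with h_n mapping J_n into J_{n+1}, each h_n strictly increasing on J_n, and h_n(y) > y for all y ∈ J_n. Let g : ℝ → ℝ be nondecreasing and assume g(h_n(y)) ≤ h_n(y+1) − h_n(y) whenever both y and y+1 lie in J_n. Let (u_n)_{n ∈ ℕ} be a sequence of integers with limsup_{n→∞} u_n = +∞ and u_{n+1} − u_n ≤ g(u_n) − 1 for all n ∈ ℕ, and suppose there exists k₀ ∈ ℕ with u_{k₀} ∈ J_0 and u_{k₀} + 1 ∈ J_0. Then there exists a strictly increasing sequence (k_n)_{n ∈ ℕ} of natural numbers with k_0 = k₀ such that, setting v_n := u_{k_n}, one has for every n ∈ ℕ: v_n ∈ J_n, v_n + 1 ∈ J_n, and h_n(v_n)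 ≤ v_{n+1} < h_n(v_n + 1) − 1. -/
open Filter Set

/-- Second step of the proof of Theorem 1: extraction of a subsequence (v_n) = (u_{k_n})
squeezed between h_n(v_n) and h_n(v_n + 1) − 1. -/
theorem stmt_10 (J : ℕ → Set ℝ)
    (hJne : ∀ n, (J n).Nonempty) (hJopen : ∀ n, IsOpen (J n))
    (hJconn : ∀ n, (J n).OrdConnected)
    (h : ℕ → ℝ → ℝ)
    (hmaps : ∀ n, ∀ y ∈ J n, h n y ∈ J (n + 1))
    (hmono : ∀ n, StrictMonoOn (h n) (J n))
    (hgt : ∀ n, ∀ y ∈ J n, y < h n y)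
    (g : ℝ → ℝ) (hg : Monotone g)
    (hineq : ∀ n, ∀ y : ℝ, y ∈ J n → y + 1 ∈ J n → g (h n y) ≤ h n (y + 1) - h n y)
    (u : ℕ → ℤ)
    (hlimsup : Filter.atTop.limsup (fun n => ((u n : ℝ) : EReal)) = ⊤)
    (hgap : ∀ n : ℕ, ((u (n + 1) : ℝ) - (u n : ℝ)) ≤ g (u n) - 1)
    (k₀ : ℕ) (hk₀ : (u k₀ : ℝ) ∈ J 0 ∧ (u k₀ : ℝ) + 1 ∈ J 0) :
    ∃ k : ℕ → ℕ, StrictMono k ∧ k 0 = k₀ ∧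
      ∀ n : ℕ, (u (k n) : ℝ) ∈ J n ∧ (u (k n) : ℝ) + 1 ∈ J n ∧
        h n (u (k n)) ≤ (u (k (n + 1)) : ℝ) ∧
        (u (k (n + 1)) : ℝ) < h n ((u (k n) : ℝ) + 1) - 1 := by
  -- From limsup = ⊤, the sequence is unbounded beyond any index
  have hub : ∀ (N : ℕ) (x : ℝ), ∃ m, N < m ∧ x ≤ (u m : ℝ) := by
    intro N x
    by_contra hcon
    push_neg at hcon
    have hev : ∀ᶠ m in atTop, ((u m : ℝ) : EReal) ≤ (x : EReal) := by
      filter_upwards [eventually_gt_atTop N] with m hm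
      exact_mod_cast (hcon m hm).le
    have hle := limsup_le_of_le (by isBoundedDefault) hev
    rw [hlimsup] at hle
    exact EReal.coe_ne_top x (top_le_iff.mp hle)
  have key : ∀ n N, ∃ M, N < M ∧ ((u N : ℝ) ∈ J n → (u N : ℝ) + 1 ∈ J n →
      ((u M : ℝ) ∈ J (n+1) ∧ (u M : ℝ) + 1 ∈ J (n+1) ∧
        h n (u N) ≤ (u M : ℝ) ∧ (u M : ℝ) < h n ((u N : ℝ) + 1) - 1)) := by
    intro n N
    by_cases hmem : (u N : ℝ) ∈ J n ∧ (u N : ℝ) + 1 ∈ J n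
    · obtain ⟨h1, h2⟩ := hmem
      set v : ℝ := (u N : ℝ) with hv
      set x : ℝ := h n v with hx
      have hxlt : v < x := hgt n v h1
      have hP : ∃ m, N < m ∧ x ≤ (u m : ℝ) := hub N x
      set M := Nat.find hP with hM
      obtain ⟨hNM, hxM⟩ := Nat.find_spec hP
      have hMpos : M - 1 + 1 = M := Nat.succ_pred_eq_of_pos (Nat.lt_of_le_of_lt (Nat.zero_le N) hNM)
      have hprev : (u (M - 1) : ℝ) < x := by
        rcases eq_or_lt_of_le (Nat.le_sub_one_of_lt hNM) with hEq | hLt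
        · have hEq' : M - 1 = N := hEq.symm
          rw [hEq']; exact hxlt
        · have hmin := Nat.find_min hP (m := M - 1) (by omega)
          push_neg at hmin
          exact hmin hLt
      have hgM := hgap (M - 1)
      rw [hMpos] at hgM
      have hgmono : g (u (M - 1)) ≤ g x := hg hprev.le
      have hiq := hineq n v h1 h2
      have hbound : (u M : ℝ) < h n (v + 1) - 1 := by linarith
      have hv1 : h n (v + 1) ∈ J (n + 1) := hmaps n _ h2
      have hv0 : x ∈ J (n + 1) := hmaps n v h1
      have hIcc := (hJconn (n + 1)).out hv0 hv1
      have hle : x ≤ h n (v + 1) := ((hmono n) h1 h2 (by linarith)).le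
      have hm1 : (u M : ℝ) ∈ J (n + 1) := hIcc ⟨hxM, by linarith⟩
      have hm2 : (u M : ℝ) + 1 ∈ J (n + 1) := hIcc ⟨by linarith, by linarith⟩
      exact ⟨M, hNM, fun _ _ => ⟨hm1, hm2, hxM, hbound⟩⟩
    · exact ⟨N + 1, Nat.lt_succ_self N, fun h1 h2 => absurd ⟨h1, h2⟩ hmem⟩
  choose f hf using key
  let k : ℕ → ℕ := fun n => Nat.rec k₀ (fun n kn => f n kn) n
  have hksucc : ∀ n, k (n + 1) = f n (k n) := fun n => rfl
  have hinv : ∀ n, (u (k n) : ℝ) ∈ J n ∧ (u (k n) : ℝ) + 1 ∈ J n := by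
    intro n
    induction n with
    | zero => exact hk₀
    | succ n ih =>
      have hstep := (hf n (k n)).2 ih.1 ih.2
      rw [hksucc n]
      exact ⟨hstep.1, hstep.2.1⟩
  refine ⟨k, strictMono_nat_of_lt_succ (fun n => ?_), rfl, fun n => ?_⟩
  · rw [hksucc n]; exact (hf n (k n)).1
  · have hstep := (hf n (k n)).2 (hinv n).1 (hinv n).2
    rw [hksucc n]
    exact ⟨(hinv n).1, (hinv n).2, hstep.2.2.1, hstep.2.2.2⟩
end

section
/- Let I ⊆ ℝ be an interval and (f_n)_{n ∈ ℕ} a sequence of functions, each continuous and strictly increasing on I. Let (v_n)_{n ∈ ℕ} be a sequence of integers such that for every n both v_n and v_n + 1 lie in f_n(I), and, writing x_n := f_n⁻¹(v_n) and y_n := f_n⁻¹(v_n + 1) (the preimages in I), assume f_{n+1}(x_n) ≤ v_{n+1} and v_{n+1} + 1 < f_{n+1}(y_n) for every n ∈ ℕ. Then there exists a real A ∈ I with x_n ≤ A < y_n for all n, and in particular ⌊f_n(A)⌋ = v_n for every n ∈ ℕ. -/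
open Set

/-- Third (concluding) step of the proof of Theorem 1: nested intervals give a point A
with x_n ≤ A < y_n for all n, whence ⌊f_n(A)⌋ = v_n. Here x_n = f_n⁻¹(v_n) and
y_n = f_n⁻¹(v_n + 1) are given as explicit preimages in I. -/
theorem stmt_11 (I : Set ℝ) (hIconn : I.OrdConnected)
    (f : ℕ → ℝ → ℝ)
    (hcont : ∀ n, ContinuousOn (f n) I)
    (hmono : ∀ n, StrictMonoOn (f n) I)
    (v : ℕ → ℤ) (x y : ℕ → ℝ)
    (hx : ∀ n, x n ∈ I) (hy : ∀ n, y n ∈ I)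
    (hfx : ∀ n, f n (x n) = (v n : ℝ))
    (hfy : ∀ n, f n (y n) = (v n : ℝ) + 1)
    (hlow : ∀ n, f (n + 1) (x n) ≤ (v (n + 1) : ℝ))
    (hhigh : ∀ n, (v (n + 1) : ℝ) + 1 < f (n + 1) (y n)) :
    ∃ A ∈ I, (∀ n, x n ≤ A ∧ A < y n) ∧ ∀ n, ⌊f n A⌋ = v n := by
  have hxy : ∀ n, x n < y n := fun n => by
    have := (hmono n).lt_iff_lt (hx n) (hy n)
    rw [← this]; rw [hfx n, hfy n]; linarith
  have hxmono : ∀ n, x n ≤ x (n + 1) := fun n => by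
    have := (hmono (n + 1)).le_iff_le (hx n) (hx (n + 1))
    rw [← this, hfx (n + 1)]; exact hlow n
  have hydec : ∀ n, y (n + 1) < y n := fun n => by
    have := (hmono (n + 1)).lt_iff_lt (hy (n + 1)) (hy n)
    rw [← this, hfy (n + 1)]; exact hhigh n
  have hxm : Monotone x := monotone_nat_of_le_succ hxmono
  have hym : Antitone y := antitone_nat_of_succ_le fun n => (hydec n).le
  have hlt : ∀ m n, x m < y n := fun m n => by
    calc x m ≤ x (max m n) := hxm (le_max_left m n)
    _ < y (max m n) := hxy _
    _ ≤ y n := hym (le_max_right m n)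
  have hbdd : BddAbove (Set.range x) := ⟨y 0, by rintro _ ⟨m, rfl⟩; exact (hlt m 0).le⟩
  set A := sSup (Set.range x) with hA
  have hxA : ∀ n, x n ≤ A := fun n => le_csSup hbdd ⟨n, rfl⟩
  have hAy : ∀ n, A < y n := fun n => by
    have : A ≤ y (n + 1) := csSup_le (Set.range_nonempty x) (by rintro _ ⟨m, rfl⟩; exact (hlt m (n+1)).le)
    exact lt_of_le_of_lt this (hydec n)
  have hAI : A ∈ I := hIconn.out (hx 0) (hy 0) ⟨hxA 0, (hAy 0).le⟩
  refine ⟨A, hAI, fun n => ⟨hxA n, hAy n⟩, fun n => ?_⟩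
  have h1 : (v n : ℝ) ≤ f n A := by
    rw [← hfx n]; exact (hmono n).monotoneOn (hx n) hAI (hxA n)
  have h2 : f n A < (v n : ℝ) + 1 := by
    rw [← hfy n]; exact (hmono n) hAI (hy n) (hAy n)
  exact Int.floor_eq_iff.mpr ⟨h1, h2⟩
end

section
/- Let k > 1 and ξ > 1 be real numbers and let a > 1 be a real number satisfying (log x)^{k+1} ≤ x^{1/2} for all x > a and (n+1)^{k+1} ≤ a^{n^{ξ−1}/2} for all integers n ≥ 1. Then for every integer n ≥ 1 and every real x > a: (n+1)^{ξ(k+1)} · (log x)^{k+1} ≤ x^{(n+1)^ξ − n^ξ}. -/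
open Real

/-- Key inequality in the proof of Corollary 1:
(n+1)^(ξ(k+1)) · (log x)^(k+1) ≤ x^((n+1)^ξ − n^ξ) for x > a and n ≥ 1. -/
theorem stmt_12 (k ξ a : ℝ) (hk : 1 < k) (hξ : 1 < ξ) (ha : 1 < a)
    (h1 : ∀ x : ℝ, a < x → (Real.log x) ^ (k + 1) ≤ x ^ ((1 : ℝ) / 2))
    (h2 : ∀ n : ℕ, 1 ≤ n → ((n : ℝ) + 1) ^ (k + 1) ≤ a ^ ((n : ℝ) ^ (ξ - 1) / 2)) :
    ∀ n : ℕ, 1 ≤ n → ∀ x : ℝ, a < x →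
      ((n : ℝ) + 1) ^ (ξ * (k + 1)) * (Real.log x) ^ (k + 1) ≤
        x ^ (((n : ℝ) + 1) ^ ξ - (n : ℝ) ^ ξ) := by
  intro n hn x hx
  set N : ℝ := (n : ℝ) with hNdef
  have hN : (1 : ℝ) ≤ N := by rw [hNdef]; exact_mod_cast hn
  have hN0 : (0 : ℝ) < N := lt_of_lt_of_le one_pos hN
  have hx1 : (1 : ℝ) < x := ha.trans hx
  have ha0 : (0 : ℝ) < a := lt_trans one_pos ha
  have hξ0 : (0 : ℝ) ≤ ξ := le_of_lt (lt_trans one_pos hξ)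
  -- n^{ξ-1} ≥ 1
  have hNξ1 : (1 : ℝ) ≤ N ^ (ξ - 1) := Real.one_le_rpow hN (by linarith)
  -- Step A : (N+1)^{ξ(k+1)} ≤ a^{ξ * (N^{ξ-1}/2)}
  have hA : (N + 1) ^ (ξ * (k + 1)) ≤ a ^ (ξ * (N ^ (ξ - 1) / 2)) := by
    have h2' := h2 n hn
    have := Real.rpow_le_rpow (Real.rpow_nonneg (by positivity) _) h2' hξ0
    rw [← Real.rpow_mul (by positivity), ← Real.rpow_mul ha0.le] at this
    calc (N + 1) ^ (ξ * (k + 1)) = (N + 1) ^ ((k + 1) * ξ) := by rw [mul_comm]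
      _ ≤ a ^ (N ^ (ξ - 1) / 2 * ξ) := this
      _ = a ^ (ξ * (N ^ (ξ - 1) / 2)) := by rw [mul_comm]
  -- Step B : a^{...} ≤ x^{...}
  have hB : a ^ (ξ * (N ^ (ξ - 1) / 2)) ≤ x ^ (ξ * (N ^ (ξ - 1) / 2)) :=
    Real.rpow_le_rpow ha0.le hx.le (by positivity)
  -- combine with h1
  have hlog : (Real.log x) ^ (k + 1) ≤ x ^ ((1 : ℝ) / 2) := h1 x hx
  have hmul : (N + 1) ^ (ξ * (k + 1)) * (Real.log x) ^ (k + 1) ≤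
      x ^ (ξ * (N ^ (ξ - 1) / 2) + 1 / 2) := by
    rw [Real.rpow_add (lt_trans one_pos hx1)]
    exact mul_le_mul (hA.trans hB) hlog
      (Real.rpow_nonneg (Real.log_nonneg hx1.le) _) (Real.rpow_nonneg (by positivity) _)
  refine hmul.trans (Real.rpow_le_rpow_of_exponent_le hx1.le ?_)
  -- ξ * N^{ξ-1}/2 + 1/2 ≤ ξ * N^{ξ-1} ≤ (N+1)^ξ - N^ξ
  have hge1 : (1 : ℝ) ≤ ξ * N ^ (ξ - 1) := le_trans hξ.le
    (le_mul_of_one_le_right (by linarith) hNξ1)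
  have hbern : N ^ ξ + ξ * N ^ (ξ - 1) ≤ (N + 1) ^ ξ := by
    have hb : 1 + ξ * (1 / N) ≤ (1 + 1 / N) ^ ξ :=
      one_add_mul_self_le_rpow_one_add (by have h := one_div_pos.mpr hN0; linarith) hξ.le
    have h3 : N ^ ξ * (1 + ξ * (1 / N)) ≤ N ^ ξ * (1 + 1 / N) ^ ξ :=
      mul_le_mul_of_nonneg_left hb (Real.rpow_nonneg hN0.le _)
    have hNξsub : N ^ (ξ - 1) = N ^ ξ / N := by
      rw [Real.rpow_sub hN0, Real.rpow_one]
    have hrw : N ^ ξ * (1 + 1 / N) ^ ξ = (N + 1) ^ ξ := by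
      rw [← Real.mul_rpow hN0.le (by positivity)]
      congr 1
      field_simp
    rw [hrw] at h3
    calc N ^ ξ + ξ * N ^ (ξ - 1) = N ^ ξ * (1 + ξ * (1 / N)) := by
          rw [hNξsub]; field_simp
      _ ≤ (N + 1) ^ ξ := h3
  linarith
end
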